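/- arXiv:1807.02273 — 5 statements merged into one kernel-verified Lean document; each statement's English description precedes it below -/
import Mathlib

section
/- Unitarity of the R-matrix. For all positive integers M, N with M ≠ N (set n = M+N), every q ∈ ℂ with 0 < |q| < 1, and every z ∈ ℂ with z ≠ 0, q²z ≠ 1 and z ≠ q², one has R̄(z) · P · R̄(1/z) · P = Id on ℂⁿ ⊗ ℂⁿ, where P is the graded permutation operator. (Equivalently, R₁₂(z) R₂₁(1/z) = 1 with R₂₁(z) = P R₁₂(z) P.) -/
/-!
`R̄(z)` only couples `vᵢ ⊗ vⱼ` with itself and with `vⱼ ⊗ vᵢ`. Conjugating such a matrix by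
the graded permutation `P`, whose signs are swap-invariant and square to one, merely relabels
its coefficients along the swap, so `R̄(z) · (P R̄(1/z) P)` has the same shape and can be checked
coefficientwise: `(-1)² = 1` or `a(z) a(1/z) = 1` on the `(i, i)` lines, and on each
`(i, j), (j, i)` plane the identities `b(z) b(1/z) + c(z) c(1/z) = 1` and
`b(z) c(1/z) + z b(1/z) c(z) = 0`.
-/

/-- `a(z) = (z−q²)/(1−q²z)`. -/
noncomputable def aR (q z : ℂ) : ℂ := (z - q ^ 2) / (1 - q ^ 2 * z)

/-- `b(z) = q(1−z)/(1−q²z)`. -/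
noncomputable def bR (q z : ℂ) : ℂ := q * (1 - z) / (1 - q ^ 2 * z)

/-- `c(z) = (1−q²)/(1−q²z)`. -/
noncomputable def cR (q z : ℂ) : ℂ := (1 - q ^ 2) / (1 - q ^ 2 * z)

/-- Parity of a basis index: `0` for the first `M` indices, `1` for the rest. -/
def par (M : ℕ) {n : ℕ} (i : Fin n) : ℕ := if (i : ℕ) < M then 0 else 1

/-- The R-matrix `R̄(z)` of `U_q(sl^(M|N))` acting on `ℂⁿ ⊗ ℂⁿ`, `n = M+N`;
the row index is the pair `(k₁,k₂)` and the column index the pair `(j₁,j₂)`. -/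
noncomputable def Rbar (M N : ℕ) (q z : ℂ) :
    Matrix (Fin (M + N) × Fin (M + N)) (Fin (M + N) × Fin (M + N)) ℂ := fun k j =>
  if k.1 = j.1 ∧ k.2 = j.2 then
    (if j.1 = j.2 then (if (j.1 : ℕ) < M then -1 else aR q z) else -bR q z)
  else if k.1 = j.2 ∧ k.2 = j.1 then
    (-1 : ℂ) ^ (par M k.1 * par M k.2) *
      (if (k.1 : ℕ) < (k.2 : ℕ) then cR q z else z * cR q z)
  else 0

/-- The graded permutation operator `P` on `ℂⁿ ⊗ ℂⁿ`. -/
noncomputable def Pg (M n : ℕ) : Matrix (Fin n × Fin n) (Fin n × Fin n) ℂ := fun k j =>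
  if j.1 = k.2 ∧ j.2 = k.1 then (-1 : ℂ) ^ (par M k.1 * par M k.2) else 0

section SwapBlock

variable {ι R : Type*} [DecidableEq ι]

def swapBlock [Zero R] (d s : ι × ι → R) : Matrix (ι × ι) (ι × ι) R := fun k j =>
  if j = k then d k else if j = k.swap then s k else 0

def signedSwap [Zero R] (σ : ι × ι → R) : Matrix (ι × ι) (ι × ι) R := fun k j =>
  if j = k.swap then σ k else 0

theorem swapBlock_mul [Fintype ι] [Semiring R] {d s d' s' : ι × ι → R}
    (hs : ∀ i, s (i, i) = 0) :
    swapBlock d s * swapBlock d' s' =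
      swapBlock (fun k => d k * d' k + s k * s' k.swap)
        (fun k => d k * s' k + s k * d' k.swap) := by
  ext k j
  rw [Matrix.mul_apply]
  by_cases hk : k.swap = k
  · obtain ⟨i, j'⟩ := k
    obtain rfl : i = j' := congrArg Prod.snd hk
    rw [Fintype.sum_eq_single (i, i) fun m hm => by simp [swapBlock, hm]]
    simp [swapBlock, hs]
  · rw [Fintype.sum_eq_add k k.swap (Ne.symm hk) fun m hm => by simp [swapBlock, hm.1, hm.2]]
    simp only [swapBlock, Prod.swap_swap, if_neg hk, if_neg (Ne.symm hk)]
    split_ifs <;> simp_all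

theorem swapBlock_eq_one [Semiring R] {d s : ι × ι → R} (hd : ∀ k, d k = 1)
    (hs : ∀ i j, i ≠ j → s (i, j) = 0) : swapBlock d s = 1 := by
  ext k j
  by_cases hjk : j = k
  · simp [swapBlock, hjk, hd, Matrix.one_apply]
  rw [Matrix.one_apply_ne (Ne.symm hjk)]
  simp only [swapBlock, if_neg hjk]
  split_ifs with hswap
  · obtain ⟨i, i'⟩ := k
    exact hs i i' fun h => hjk (by simp [hswap, h])
  · rfl

theorem mul_signedSwap_apply [Fintype ι] [Semiring R] (σ : ι × ι → R)
    (A : Matrix (ι × ι) (ι × ι) R) (k j : ι × ι) :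
    (A * signedSwap σ) k j = A k j.swap * σ j.swap := by
  rw [Matrix.mul_apply, Fintype.sum_eq_single j.swap]
  · simp [signedSwap]
  · intro m hm
    simp only [signedSwap, mul_ite, mul_zero]
    exact if_neg fun h => hm (by rw [h, Prod.swap_swap])

theorem signedSwap_mul_apply [Fintype ι] [Semiring R] (σ : ι × ι → R)
    (A : Matrix (ι × ι) (ι × ι) R) (k j : ι × ι) :
    (signedSwap σ * A) k j = σ k * A k.swap j := by
  rw [Matrix.mul_apply, Fintype.sum_eq_single k.swap]
  · simp [signedSwap]
  · intro m hm
    simp [signedSwap, hm]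

theorem signedSwap_mul_swapBlock_mul_signedSwap [Fintype ι] [CommSemiring R]
    {σ d s : ι × ι → R} (hσ : ∀ k, σ k.swap = σ k) (hσσ : ∀ k, σ k * σ k = 1) :
    signedSwap σ * swapBlock d s * signedSwap σ = swapBlock (d ∘ Prod.swap) (s ∘ Prod.swap) := by
  ext k j
  rw [mul_signedSwap_apply, signedSwap_mul_apply]
  simp only [swapBlock, Prod.swap_swap, Prod.swap_eq_iff_eq_swap, Function.comp_apply]
  split_ifs with h₁ h₂
  · subst h₁; rw [hσ, mul_right_comm, hσσ, one_mul]
  · subst h₂; rw [Prod.swap_swap, mul_right_comm, hσσ, one_mul]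
  · simp

end SwapBlock

section ScalarIdentities

variable {q z : ℂ}

theorem aR_mul_aR_inv (hz : z ≠ 0) (hz1 : q ^ 2 * z ≠ 1) (hz2 : z ≠ q ^ 2) :
    aR q z * aR q z⁻¹ = 1 := by
  have h1 : 1 - z * q ^ 2 ≠ 0 := sub_ne_zero.mpr (by rwa [mul_comm, ne_comm])
  have h2 : z - q ^ 2 ≠ 0 := sub_ne_zero.mpr hz2
  unfold aR
  field_simp

theorem bR_mul_bR_inv_add_cR_mul_cR_inv (hz : z ≠ 0) (hz1 : q ^ 2 * z ≠ 1) (hz2 : z ≠ q ^ 2) :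
    bR q z * bR q z⁻¹ + cR q z * cR q z⁻¹ = 1 := by
  have h1 : 1 - z * q ^ 2 ≠ 0 := sub_ne_zero.mpr (by rwa [mul_comm, ne_comm])
  have h2 : z - q ^ 2 ≠ 0 := sub_ne_zero.mpr hz2
  unfold bR cR
  field_simp
  ring

theorem bR_mul_cR_inv_add_mul_bR_inv_mul_cR (hz : z ≠ 0) (hz2 : z ≠ q ^ 2) :
    bR q z * cR q z⁻¹ + z * bR q z⁻¹ * cR q z = 0 := by
  have h2 : z - q ^ 2 ≠ 0 := sub_ne_zero.mpr hz2
  unfold bR cR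
  field_simp
  ring

end ScalarIdentities

section RMatrix

variable (M : ℕ) {n : ℕ}

def gradedSign (k : Fin n × Fin n) : ℂ := (-1) ^ (par M k.1 * par M k.2)

noncomputable def rbarDiag (q z : ℂ) (k : Fin n × Fin n) : ℂ :=
  if k.1 = k.2 then (if (k.1 : ℕ) < M then -1 else aR q z) else -bR q z

noncomputable def rbarSwap (q z : ℂ) (k : Fin n × Fin n) : ℂ :=
  if k.1 = k.2 then 0
  else gradedSign M k * (if (k.1 : ℕ) < k.2 then cR q z else z * cR q z)

variable {M}

theorem gradedSign_swap (k : Fin n × Fin n) : gradedSign M k.swap = gradedSign M k := by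
  simp only [gradedSign, Prod.fst_swap, Prod.snd_swap, mul_comm]

theorem gradedSign_mul_self (k : Fin n × Fin n) : gradedSign M k * gradedSign M k = 1 := by
  rw [gradedSign, ← mul_pow]
  norm_num

theorem Pg_eq_signedSwap : Pg M n = signedSwap (gradedSign M) := by
  ext k j
  simp only [Pg, signedSwap, gradedSign, Prod.ext_iff, Prod.fst_swap, Prod.snd_swap]

theorem Rbar_eq_swapBlock (N : ℕ) (q z : ℂ) :
    Rbar M N q z = swapBlock (rbarDiag M q z) (rbarSwap M q z) := by
  ext ⟨k₁, k₂⟩ j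
  by_cases hdiag : j = (k₁, k₂)
  · simp [Rbar, swapBlock, rbarDiag, hdiag]
  by_cases hswap : j = (k₂, k₁)
  · have hk : k₁ ≠ k₂ := fun h => hdiag (by rw [hswap, h])
    simp [Rbar, swapBlock, rbarSwap, gradedSign, hswap, hk, Ne.symm hk]
  · have hdiag' : ¬(k₁ = j.1 ∧ k₂ = j.2) := fun h => hdiag (by simp [h])
    have hswap' : ¬(k₁ = j.2 ∧ k₂ = j.1) := fun h => hswap (by simp [h])
    simp [Rbar, swapBlock, hdiag, hswap, hdiag', hswap']

theorem rbarSwap_apply_self (q z : ℂ) (i : Fin n) : rbarSwap M q z (i, i) = 0 :=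
  if_pos rfl

theorem rbarDiag_swap (q z : ℂ) (k : Fin n × Fin n) :
    rbarDiag M q z k.swap = rbarDiag M q z k := by
  obtain ⟨i, j⟩ := k
  by_cases hij : i = j
  · rw [hij, Prod.swap_prod_mk]
  · simp [rbarDiag, hij, Ne.symm hij]

theorem rbar_unitarity_diagCoeff {q z : ℂ} (hz : z ≠ 0) (hz1 : q ^ 2 * z ≠ 1) (hz2 : z ≠ q ^ 2)
    (k : Fin n × Fin n) :
    rbarDiag M q z k * rbarDiag M q z⁻¹ k + rbarSwap M q z k * rbarSwap M q z⁻¹ k = 1 := by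
  by_cases hk : k.1 = k.2
  · simp only [rbarDiag, rbarSwap, if_pos hk, mul_zero, add_zero]
    split_ifs
    · norm_num
    · exact aR_mul_aR_inv hz hz1 hz2
  simp only [rbarDiag, rbarSwap, if_neg hk]
  have hbc := bR_mul_bR_inv_add_cR_mul_cR_inv hz hz1 hz2
  have hσ := gradedSign_mul_self (M := M) k
  split_ifs
  · linear_combination hbc + cR q z * cR q z⁻¹ * hσ
  · linear_combination hbc + cR q z * cR q z⁻¹ * hσ +
      gradedSign M k * gradedSign M k * cR q z * cR q z⁻¹ * mul_inv_cancel₀ hz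

theorem rbar_unitarity_swapCoeff {q z : ℂ} (hz : z ≠ 0) (hz2 : z ≠ q ^ 2)
    (k : Fin n × Fin n) (hk : k.1 ≠ k.2) :
    rbarDiag M q z k * rbarSwap M q z⁻¹ k.swap + rbarSwap M q z k * rbarDiag M q z⁻¹ k = 0 := by
  have hk' : k.2 ≠ k.1 := Ne.symm hk
  simp only [rbarDiag, rbarSwap, Prod.fst_swap, Prod.snd_swap, gradedSign_swap, if_neg hk,
    if_neg hk']
  have hbc := bR_mul_cR_inv_add_mul_bR_inv_mul_cR hz hz2
  split_ifs
  · omega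
  · linear_combination -gradedSign M k * hbc
  · linear_combination (-gradedSign M k * z⁻¹) * hbc +
      gradedSign M k * bR q z⁻¹ * cR q z * inv_mul_cancel₀ hz
  · exact absurd (Fin.ext (by omega)) hk

end RMatrix

theorem R_unitarity_general (M N : ℕ) (q : ℂ) (z : ℂ) (hz : z ≠ 0) (hz1 : q ^ 2 * z ≠ 1) (hz2 : z ≠ q ^ 2) :
    Rbar M N q z * Pg M (M + N) * Rbar M N q (1 / z) * Pg M (M + N) = 1 := by
  rw [Matrix.mul_assoc (Rbar M N q z * _), Matrix.mul_assoc, ← Matrix.mul_assoc (Pg M _),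
    Pg_eq_signedSwap, Rbar_eq_swapBlock, Rbar_eq_swapBlock, one_div,
    signedSwap_mul_swapBlock_mul_signedSwap gradedSign_swap gradedSign_mul_self,
    swapBlock_mul (rbarSwap_apply_self q z)]
  refine swapBlock_eq_one (fun k => ?_) (fun i j hij => ?_)
  · simpa only [Function.comp_apply, Prod.swap_swap, rbarDiag_swap] using
      rbar_unitarity_diagCoeff hz hz1 hz2 k
  · simpa only [Function.comp_apply, Prod.swap_swap, rbarDiag_swap] using
      rbar_unitarity_swapCoeff hz hz2 (i, j) hij

/-- Unitarity of the R-matrix: `R̄(z) P R̄(1/z) P = 1` on `ℂⁿ ⊗ ℂⁿ`. -/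
theorem R_unitarity (M N : ℕ) (hM : 1 ≤ M) (hN : 1 ≤ N) (hMN : M ≠ N)
    (q : ℂ) (hq0 : 0 < ‖q‖) (hq1 : ‖q‖ < 1)
    (z : ℂ) (hz : z ≠ 0) (hz1 : q ^ 2 * z ≠ 1) (hz2 : z ≠ q ^ 2) :
    Rbar M N q z * Pg M (M + N) * Rbar M N q (1 / z) * Pg M (M + N) = 1 :=
  R_unitarity_general M N q z hz hz1 hz2
end

section
/- Proposition 2. Let M, N be positive integers and let μ, ν be integers with 1 ≤ μ ≤ M and M+1 ≤ ν ≤ M+N. With pairs (w_j, w_j') for j = μ, …, ν−1 carrying the U_q(ŝl(M|N)) exchange factors (H^b for 1 ≤ j ≤ M−1, H^0 for j = M, H^f for M+1 ≤ j ≤ M+N−1), the weak equality Π_{j=μ}^{M−1} (q w_j − w_{j+1}')(w_j' − q w_{j+1}) · Π_{j=M}^{ν−2} (w_j − q w_{j+1}')(q w_j' − w_{j+1}) ∼ 0 holds with respect to the pairs (w_μ, w_μ'), …, (w_{ν−1}, w_{ν−1}'). -/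
/-- Bosonic exchange factor `H^b(u,v) = -(q²v - u)/(q²u - v)`. -/
noncomputable def Hb (q u v : ℂ) : ℂ := -(q ^ 2 * v - u) / (q ^ 2 * u - v)

/-- Fermionic exchange factor `H^f(u,v) = -(q²u - v)/(q²v - u)`. -/
noncomputable def Hf (q u v : ℂ) : ℂ := -(q ^ 2 * u - v) / (q ^ 2 * v - u)

/-- Exchange factor assignment for `U_q(sl^(M|N))`: bosonic for `j < M`,
the constant `-1` for `j = M`, fermionic for `j > M`. -/
noncomputable def Hex (M : ℕ) (q : ℂ) (j : ℕ) : ℂ → ℂ → ℂ :=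
  if j < M then Hb q else if j = M then fun _ _ => -1 else Hf q

/-- Interchange `w_j` and `w_j'` for every `j ∈ σ`. -/
def swapOn (σ : Finset ℕ) (w w' : ℕ → ℂ) : ℕ → ℂ := fun j => if j ∈ σ then w' j else w j

/-- Weak equality `F ∼ G` with respect to the pairs `(w_j, w_j')`, `j ∈ J`,
carrying exchange factors `H j`. -/
def WeakEq (J : Finset ℕ) (H : ℕ → ℂ → ℂ → ℂ) (w w' : ℕ → ℂ)
    (F G : (ℕ → ℂ) → (ℕ → ℂ) → ℂ) : Prop :=
  ∑ σ ∈ J.powerset, (∏ j ∈ σ, H j (w' j) (w j)) * F (swapOn σ w w') (swapOn σ w' w)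
    = ∑ σ ∈ J.powerset, (∏ j ∈ σ, H j (w' j) (w j)) * G (swapOn σ w w') (swapOn σ w' w)

/-! ### Auxiliary machinery -/

/-- Replace the value of `f` at `M` by `a`. -/
noncomputable def bnd (M : ℕ) (a : ℂ) (f : ℕ → ℂ) : ℕ → ℂ := fun j => if j = M then a else f j

lemma bnd_self (M : ℕ) (a : ℂ) (f : ℕ → ℂ) : bnd M a f M = a := if_pos rfl

lemma bnd_ne (M : ℕ) (a : ℂ) (f : ℕ → ℂ) {j : ℕ} (h : j ≠ M) : bnd M a f j = f j := if_neg h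

lemma swapOn_not_mem {σ : Finset ℕ} (w w' : ℕ → ℂ) {j : ℕ} (h : j ∉ σ) :
    swapOn σ w w' j = w j := by simp [swapOn, h]

lemma swapOn_insert_self (σ : Finset ℕ) (w w' : ℕ → ℂ) (a : ℕ) :
    swapOn (insert a σ) w w' a = w' a := by simp [swapOn]

lemma swapOn_insert_ne (σ : Finset ℕ) (w w' : ℕ → ℂ) {a j : ℕ} (h : j ≠ a) :
    swapOn (insert a σ) w w' j = swapOn σ w w' j := by simp [swapOn, h]

/-- Boundary sum on the bosonic side. -/
noncomputable def SA (q : ℂ) (μ M : ℕ) (w w' : ℕ → ℂ) (a b : ℂ) : ℂ :=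
  ∑ σ ∈ (Finset.Ico μ M).powerset, (∏ j ∈ σ, Hb q (w' j) (w j)) *
    ∏ j ∈ Finset.Ico μ M,
      (q * bnd M a (swapOn σ w w') j - bnd M b (swapOn σ w' w) (j + 1)) *
      (bnd M b (swapOn σ w' w) j - q * bnd M a (swapOn σ w w') (j + 1))

/-- Boundary sum on the fermionic side. -/
noncomputable def SB (q : ℂ) (M ν : ℕ) (w w' : ℕ → ℂ) (a b : ℂ) : ℂ :=
  ∑ σ ∈ (Finset.Ico (M + 1) ν).powerset, (∏ j ∈ σ, Hf q (w' j) (w j)) *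
    ∏ j ∈ Finset.Ico M (ν - 1),
      (bnd M a (swapOn σ w w') j - q * bnd M b (swapOn σ w' w) (j + 1)) *
      (q * bnd M b (swapOn σ w' w) j - bnd M a (swapOn σ w w') (j + 1))

lemma onepairA (q x y a b : ℂ) (h : q ^ 2 * y ≠ x) :
    (q * x - b) * (y - q * a) + Hb q y x * ((q * y - b) * (x - q * a))
      = (q * x - a) * (y - q * b) + Hb q y x * ((q * y - a) * (x - q * b)) := by
  have h' : q ^ 2 * y - x ≠ 0 := sub_ne_zero.mpr h
  rw [Hb]
  field_simp
  ring

lemma onepairB (q x y a b : ℂ) (h : q ^ 2 * x ≠ y) :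
    (a - q * y) * (q * b - x) + Hf q y x * ((a - q * x) * (q * b - y))
      = (b - q * y) * (q * a - x) + Hf q y x * ((b - q * x) * (q * a - y)) := by
  have h' : q ^ 2 * x - y ≠ 0 := sub_ne_zero.mpr h
  rw [Hf]
  field_simp
  ring
lemma bnd_shift (M : ℕ) (c : ℂ) (σ : Finset ℕ) (w w' : ℕ → ℂ) (hM : M ∉ σ) {k : ℕ}
    (hk : k ≤ M) : bnd (M + 1) c (swapOn σ w w') k = bnd M (w M) (swapOn σ w w') k := by
  rcases Nat.lt_or_ge k M with h | h
  · rw [bnd_ne _ _ _ (by omega), bnd_ne _ _ _ (by omega)]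
  · have hkM : k = M := le_antisymm hk h
    subst hkM
    rw [bnd_ne _ _ _ (by omega), bnd_self, swapOn_not_mem _ _ hM]

lemma bnd_shift_insert (M : ℕ) (c : ℂ) (σ : Finset ℕ) (w w' : ℕ → ℂ) (hM : M ∉ σ) {k : ℕ}
    (hk : k ≤ M) :
    bnd (M + 1) c (swapOn (insert M σ) w w') k = bnd M (w' M) (swapOn σ w w') k := by
  rcases Nat.lt_or_ge k M with h | h
  · rw [bnd_ne _ _ _ (by omega), bnd_ne _ _ _ (by omega), swapOn_insert_ne _ _ _ (by omega)]
  · have hkM : k = M := le_antisymm hk h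
    subst hkM
    rw [bnd_ne _ _ _ (by omega), bnd_self, swapOn_insert_self]

lemma SA_succ (q : ℂ) (μ M : ℕ) (hμM : μ ≤ M) (w w' : ℕ → ℂ) (a b : ℂ) :
    SA q μ (M + 1) w w' a b
      = SA q μ M w w' (w M) (w' M) * ((q * w M - b) * (w' M - q * a))
        + Hb q (w' M) (w M) *
          (SA q μ M w w' (w' M) (w M) * ((q * w' M - b) * (w M - q * a))) := by
  have hico : Finset.Ico μ (M + 1) = insert M (Finset.Ico μ M) := by
    ext k; simp only [Finset.mem_Ico, Finset.mem_insert]; omega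
  have hMni : M ∉ Finset.Ico μ M := by simp
  rw [SA, hico, Finset.sum_powerset_insert hMni, SA, SA, Finset.sum_mul, Finset.sum_mul,
    Finset.mul_sum]
  congr 1
  · refine Finset.sum_congr rfl fun σ hσ => ?_
    have hσs : σ ⊆ Finset.Ico μ M := Finset.mem_powerset.mp hσ
    have hMσ : M ∉ σ := fun h => hMni (hσs h)
    rw [Finset.prod_insert hMni]
    have e1 : ∀ j ∈ Finset.Ico μ M,
        (q * bnd (M + 1) a (swapOn σ w w') j - bnd (M + 1) b (swapOn σ w' w) (j + 1)) *
          (bnd (M + 1) b (swapOn σ w' w) j - q * bnd (M + 1) a (swapOn σ w w') (j + 1))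
        = (q * bnd M (w M) (swapOn σ w w') j - bnd M (w' M) (swapOn σ w' w) (j + 1)) *
          (bnd M (w' M) (swapOn σ w' w) j - q * bnd M (w M) (swapOn σ w w') (j + 1)) := by
      intro j hj
      simp only [Finset.mem_Ico] at hj
      rw [bnd_shift M a σ w w' hMσ (by omega), bnd_shift M a σ w w' hMσ (by omega),
        bnd_shift M b σ w' w hMσ (by omega), bnd_shift M b σ w' w hMσ (by omega)]
    rw [Finset.prod_congr rfl e1]
    have eM : (q * bnd (M + 1) a (swapOn σ w w') M - bnd (M + 1) b (swapOn σ w' w) (M + 1)) *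
        (bnd (M + 1) b (swapOn σ w' w) M - q * bnd (M + 1) a (swapOn σ w w') (M + 1))
        = (q * w M - b) * (w' M - q * a) := by
      rw [bnd_ne (M + 1) a (swapOn σ w w') (show M ≠ M + 1 by omega),
        bnd_ne (M + 1) b (swapOn σ w' w) (show M ≠ M + 1 by omega),
        bnd_self (M + 1) b (swapOn σ w' w), bnd_self (M + 1) a (swapOn σ w w'),
        swapOn_not_mem w w' hMσ, swapOn_not_mem w' w hMσ]
    rw [eM]
    ring
  · refine Finset.sum_congr rfl fun σ hσ => ?_
    have hσs : σ ⊆ Finset.Ico μ M := Finset.mem_powerset.mp hσ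
    have hMσ : M ∉ σ := fun h => hMni (hσs h)
    rw [Finset.prod_insert hMni, Finset.prod_insert hMσ]
    have e1 : ∀ j ∈ Finset.Ico μ M,
        (q * bnd (M + 1) a (swapOn (insert M σ) w w') j -
            bnd (M + 1) b (swapOn (insert M σ) w' w) (j + 1)) *
          (bnd (M + 1) b (swapOn (insert M σ) w' w) j -
            q * bnd (M + 1) a (swapOn (insert M σ) w w') (j + 1))
        = (q * bnd M (w' M) (swapOn σ w w') j - bnd M (w M) (swapOn σ w' w) (j + 1)) *
          (bnd M (w M) (swapOn σ w' w) j - q * bnd M (w' M) (swapOn σ w w') (j + 1)) := by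
      intro j hj
      simp only [Finset.mem_Ico] at hj
      rw [bnd_shift_insert M a σ w w' hMσ (by omega), bnd_shift_insert M a σ w w' hMσ (by omega),
        bnd_shift_insert M b σ w' w hMσ (by omega), bnd_shift_insert M b σ w' w hMσ (by omega)]
    rw [Finset.prod_congr rfl e1]
    have eM : (q * bnd (M + 1) a (swapOn (insert M σ) w w') M -
          bnd (M + 1) b (swapOn (insert M σ) w' w) (M + 1)) *
        (bnd (M + 1) b (swapOn (insert M σ) w' w) M -
          q * bnd (M + 1) a (swapOn (insert M σ) w w') (M + 1))
        = (q * w' M - b) * (w M - q * a) := by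
      rw [bnd_ne (M + 1) a (swapOn (insert M σ) w w') (show M ≠ M + 1 by omega),
        bnd_ne (M + 1) b (swapOn (insert M σ) w' w) (show M ≠ M + 1 by omega),
        bnd_self (M + 1) b (swapOn (insert M σ) w' w),
        bnd_self (M + 1) a (swapOn (insert M σ) w w'),
        swapOn_insert_self σ w w' M, swapOn_insert_self σ w' w M]
    rw [eM]
    ring
lemma bnd_shift' (M : ℕ) (c : ℂ) (σ : Finset ℕ) (w w' : ℕ → ℂ) (hM : M + 1 ∉ σ) {k : ℕ}
    (hk : M + 1 ≤ k) : bnd M c (swapOn σ w w') k = bnd (M + 1) (w (M + 1)) (swapOn σ w w') k := by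
  rcases Nat.lt_or_ge (M + 1) k with h | h
  · rw [bnd_ne _ _ _ (by omega), bnd_ne _ _ _ (by omega)]
  · have hkM : k = M + 1 := le_antisymm h hk
    subst hkM
    rw [bnd_ne _ _ _ (by omega), bnd_self, swapOn_not_mem _ _ hM]

lemma bnd_shift_insert' (M : ℕ) (c : ℂ) (σ : Finset ℕ) (w w' : ℕ → ℂ) (hM : M + 1 ∉ σ) {k : ℕ}
    (hk : M + 1 ≤ k) :
    bnd M c (swapOn (insert (M + 1) σ) w w') k
      = bnd (M + 1) (w' (M + 1)) (swapOn σ w w') k := by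
  rcases Nat.lt_or_ge (M + 1) k with h | h
  · rw [bnd_ne _ _ _ (by omega), bnd_ne _ _ _ (by omega), swapOn_insert_ne _ _ _ (by omega)]
  · have hkM : k = M + 1 := le_antisymm h hk
    subst hkM
    rw [bnd_ne _ _ _ (by omega), bnd_self, swapOn_insert_self]

lemma SB_succ (q : ℂ) (M ν : ℕ) (hν : M + 2 ≤ ν) (w w' : ℕ → ℂ) (a b : ℂ) :
    SB q M ν w w' a b
      = ((a - q * w' (M + 1)) * (q * b - w (M + 1))) *
            SB q (M + 1) ν w w' (w (M + 1)) (w' (M + 1))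
        + Hf q (w' (M + 1)) (w (M + 1)) *
          (((a - q * w (M + 1)) * (q * b - w' (M + 1))) *
            SB q (M + 1) ν w w' (w' (M + 1)) (w (M + 1))) := by
  have hico : Finset.Ico (M + 1) ν = insert (M + 1) (Finset.Ico (M + 2) ν) := by
    ext k; simp only [Finset.mem_Ico, Finset.mem_insert]; omega
  have hMni : M + 1 ∉ Finset.Ico (M + 2) ν := by simp
  have hlt : M < ν - 1 := by omega
  rw [SB, hico, Finset.sum_powerset_insert hMni, SB, SB, Finset.mul_sum, Finset.mul_sum,
    Finset.mul_sum]
  congr 1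
  · refine Finset.sum_congr rfl fun σ hσ => ?_
    have hσs : σ ⊆ Finset.Ico (M + 2) ν := Finset.mem_powerset.mp hσ
    have hMσ : M + 1 ∉ σ := fun h => hMni (hσs h)
    rw [Finset.prod_eq_prod_Ico_succ_bot hlt]
    have e1 : ∀ j ∈ Finset.Ico (M + 1) (ν - 1),
        (bnd M a (swapOn σ w w') j - q * bnd M b (swapOn σ w' w) (j + 1)) *
          (q * bnd M b (swapOn σ w' w) j - bnd M a (swapOn σ w w') (j + 1))
        = (bnd (M + 1) (w (M + 1)) (swapOn σ w w') j -
              q * bnd (M + 1) (w' (M + 1)) (swapOn σ w' w) (j + 1)) *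
          (q * bnd (M + 1) (w' (M + 1)) (swapOn σ w' w) j -
              bnd (M + 1) (w (M + 1)) (swapOn σ w w') (j + 1)) := by
      intro j hj
      simp only [Finset.mem_Ico] at hj
      rw [bnd_shift' M a σ w w' hMσ (by omega), bnd_shift' M a σ w w' hMσ (by omega),
        bnd_shift' M b σ w' w hMσ (by omega), bnd_shift' M b σ w' w hMσ (by omega)]
    rw [Finset.prod_congr rfl e1]
    have eM : (bnd M a (swapOn σ w w') M - q * bnd M b (swapOn σ w' w) (M + 1)) *
        (q * bnd M b (swapOn σ w' w) M - bnd M a (swapOn σ w w') (M + 1))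
        = (a - q * w' (M + 1)) * (q * b - w (M + 1)) := by
      rw [bnd_ne M b (swapOn σ w' w) (show M + 1 ≠ M by omega),
        bnd_ne M a (swapOn σ w w') (show M + 1 ≠ M by omega),
        bnd_self M a (swapOn σ w w'), bnd_self M b (swapOn σ w' w),
        swapOn_not_mem w w' hMσ, swapOn_not_mem w' w hMσ]
    rw [eM]
    ring
  · refine Finset.sum_congr rfl fun σ hσ => ?_
    have hσs : σ ⊆ Finset.Ico (M + 2) ν := Finset.mem_powerset.mp hσ
    have hMσ : M + 1 ∉ σ := fun h => hMni (hσs h)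
    rw [Finset.prod_eq_prod_Ico_succ_bot hlt, Finset.prod_insert hMσ]
    have e1 : ∀ j ∈ Finset.Ico (M + 1) (ν - 1),
        (bnd M a (swapOn (insert (M + 1) σ) w w') j -
            q * bnd M b (swapOn (insert (M + 1) σ) w' w) (j + 1)) *
          (q * bnd M b (swapOn (insert (M + 1) σ) w' w) j -
            bnd M a (swapOn (insert (M + 1) σ) w w') (j + 1))
        = (bnd (M + 1) (w' (M + 1)) (swapOn σ w w') j -
              q * bnd (M + 1) (w (M + 1)) (swapOn σ w' w) (j + 1)) *
          (q * bnd (M + 1) (w (M + 1)) (swapOn σ w' w) j -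
              bnd (M + 1) (w' (M + 1)) (swapOn σ w w') (j + 1)) := by
      intro j hj
      simp only [Finset.mem_Ico] at hj
      rw [bnd_shift_insert' M a σ w w' hMσ (by omega),
        bnd_shift_insert' M a σ w w' hMσ (by omega),
        bnd_shift_insert' M b σ w' w hMσ (by omega),
        bnd_shift_insert' M b σ w' w hMσ (by omega)]
    rw [Finset.prod_congr rfl e1]
    have eM : (bnd M a (swapOn (insert (M + 1) σ) w w') M -
          q * bnd M b (swapOn (insert (M + 1) σ) w' w) (M + 1)) *
        (q * bnd M b (swapOn (insert (M + 1) σ) w' w) M -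
          bnd M a (swapOn (insert (M + 1) σ) w w') (M + 1))
        = (a - q * w (M + 1)) * (q * b - w' (M + 1)) := by
      rw [bnd_ne M b (swapOn (insert (M + 1) σ) w' w) (show M + 1 ≠ M by omega),
        bnd_ne M a (swapOn (insert (M + 1) σ) w w') (show M + 1 ≠ M by omega),
        bnd_self M a (swapOn (insert (M + 1) σ) w w'),
        bnd_self M b (swapOn (insert (M + 1) σ) w' w),
        swapOn_insert_self σ w w' (M + 1), swapOn_insert_self σ w' w (M + 1)]
    rw [eM]
    ring

lemma SA_symm (q : ℂ) (μ : ℕ) (w w' : ℕ → ℂ) :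
    ∀ (n : ℕ) (a b : ℂ), (∀ j, μ ≤ j → j < μ + n → q ^ 2 * w' j ≠ w j) →
      SA q μ (μ + n) w w' a b = SA q μ (μ + n) w w' b a := by
  intro n
  induction n with
  | zero => intro a b _; simp [SA]
  | succ n ih =>
    intro a b h
    have h' : ∀ j, μ ≤ j → j < μ + n → q ^ 2 * w' j ≠ w j := fun j h1 h2 => h j h1 (by omega)
    have hx : q ^ 2 * w' (μ + n) ≠ w (μ + n) := h (μ + n) (by omega) (by omega)
    rw [show μ + (n + 1) = (μ + n) + 1 from rfl,
      SA_succ q μ (μ + n) (Nat.le_add_right μ n) w w' a b,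
      SA_succ q μ (μ + n) (Nat.le_add_right μ n) w w' b a,
      ih (w (μ + n)) (w' (μ + n)) h']
    linear_combination
      SA q μ (μ + n) w w' (w' (μ + n)) (w (μ + n)) * onepairA q (w (μ + n)) (w' (μ + n)) a b hx

lemma SB_symm (q : ℂ) (w w' : ℕ → ℂ) :
    ∀ (n M : ℕ) (a b : ℂ), (∀ j, M + 1 ≤ j → j < M + 1 + n → q ^ 2 * w j ≠ w' j) →
      SB q M (M + 1 + n) w w' a b = SB q M (M + 1 + n) w w' b a := by
  intro n
  induction n with
  | zero => intro M a b _; simp [SB]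
  | succ n ih =>
    intro M a b h
    have h' : ∀ j, (M + 1) + 1 ≤ j → j < (M + 1) + 1 + n → q ^ 2 * w j ≠ w' j :=
      fun j h1 h2 => h j (by omega) (by omega)
    have hx : q ^ 2 * w (M + 1) ≠ w' (M + 1) := h (M + 1) le_rfl (by omega)
    rw [show M + 1 + (n + 1) = (M + 1) + 1 + n by omega,
      SB_succ q M ((M + 1) + 1 + n) (by omega) w w' a b,
      SB_succ q M ((M + 1) + 1 + n) (by omega) w w' b a,
      ih (M + 1) (w (M + 1)) (w' (M + 1)) h']
    linear_combination
      SB q (M + 1) ((M + 1) + 1 + n) w w' (w' (M + 1)) (w (M + 1)) *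
        onepairB q (w (M + 1)) (w' (M + 1)) a b hx
lemma sum_powerset_union (B : Finset ℕ) :
    ∀ A : Finset ℕ, Disjoint A B → ∀ f : Finset ℕ → ℂ,
      ∑ σ ∈ (A ∪ B).powerset, f σ
        = ∑ σ1 ∈ A.powerset, ∑ σ2 ∈ B.powerset, f (σ1 ∪ σ2) := by
  intro A
  induction A using Finset.induction_on with
  | empty => intro _ f; simp
  | @insert a A ha ih =>
    intro hdisj f
    have haB : a ∉ B := fun hmem =>
      (Finset.disjoint_left.mp hdisj (Finset.mem_insert_self a A)) hmem
    have hAB : Disjoint A B := hdisj.mono_left (Finset.subset_insert a A)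
    have haAB : a ∉ A ∪ B := by simp [ha, haB]
    rw [Finset.insert_union, Finset.sum_powerset_insert haAB f, ih hAB f,
      ih hAB fun σ => f (insert a σ), Finset.sum_powerset_insert ha]
    congr 1
    refine Finset.sum_congr rfl fun σ1 _ => Finset.sum_congr rfl fun σ2 _ => ?_
    rw [Finset.insert_union]

section Main

variable {σ1 σ2 : Finset ℕ} {μ M ν : ℕ}

lemma swap_union_left (hσ1 : σ1 ⊆ Finset.Ico μ M) (hσ2 : σ2 ⊆ Finset.Ico (M + 1) ν)
    (w w' : ℕ → ℂ) {k : ℕ} (hk : k ≤ M) :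
    swapOn (σ1 ∪ σ2) w w' k = bnd M (w M) (swapOn σ1 w w') k := by
  have hk2 : k ∉ σ2 := fun hm => by
    have := hσ2 hm; simp only [Finset.mem_Ico] at this; omega
  rcases Nat.lt_or_ge k M with h | h
  · rw [bnd_ne _ _ _ (by omega)]
    simp [swapOn, Finset.mem_union, hk2]
  · have hkM : k = M := le_antisymm hk h
    subst hkM
    have hk1 : k ∉ σ1 := fun hm => by
      have := hσ1 hm; simp only [Finset.mem_Ico] at this; omega
    rw [bnd_self]
    simp [swapOn, Finset.mem_union, hk1, hk2]

lemma swap_union_left_insert (hσ1 : σ1 ⊆ Finset.Ico μ M) (hσ2 : σ2 ⊆ Finset.Ico (M + 1) ν)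
    (w w' : ℕ → ℂ) {k : ℕ} (hk : k ≤ M) :
    swapOn (insert M (σ1 ∪ σ2)) w w' k = bnd M (w' M) (swapOn σ1 w w') k := by
  rcases Nat.lt_or_ge k M with h | h
  · rw [swapOn_insert_ne _ _ _ (by omega), bnd_ne _ _ _ (by omega),
      ← bnd_ne M (w M) (swapOn σ1 w w') (show k ≠ M by omega),
      ← swap_union_left hσ1 hσ2 w w' hk]
  · have hkM : k = M := le_antisymm hk h
    subst hkM
    rw [swapOn_insert_self, bnd_self]

lemma swap_union_right (hσ1 : σ1 ⊆ Finset.Ico μ M) (hσ2 : σ2 ⊆ Finset.Ico (M + 1) ν)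
    (w w' : ℕ → ℂ) {k : ℕ} (hk : M ≤ k) :
    swapOn (σ1 ∪ σ2) w w' k = bnd M (w M) (swapOn σ2 w w') k := by
  have hk1 : k ∉ σ1 := fun hm => by
    have := hσ1 hm; simp only [Finset.mem_Ico] at this; omega
  rcases Nat.lt_or_ge M k with h | h
  · rw [bnd_ne _ _ _ (by omega)]
    simp [swapOn, Finset.mem_union, hk1]
  · have hkM : k = M := le_antisymm h hk
    subst hkM
    have hk2 : k ∉ σ2 := fun hm => by
      have := hσ2 hm; simp only [Finset.mem_Ico] at this; omega
    rw [bnd_self]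
    simp [swapOn, Finset.mem_union, hk1, hk2]

lemma swap_union_right_insert (hσ1 : σ1 ⊆ Finset.Ico μ M) (hσ2 : σ2 ⊆ Finset.Ico (M + 1) ν)
    (w w' : ℕ → ℂ) {k : ℕ} (hk : M ≤ k) :
    swapOn (insert M (σ1 ∪ σ2)) w w' k = bnd M (w' M) (swapOn σ2 w w') k := by
  rcases Nat.lt_or_ge M k with h | h
  · rw [swapOn_insert_ne _ _ _ (by omega), bnd_ne _ _ _ (by omega),
      ← bnd_ne M (w M) (swapOn σ2 w w') (show k ≠ M by omega),
      ← swap_union_right hσ1 hσ2 w w' hk]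
  · have hkM : k = M := le_antisymm h hk
    subst hkM
    rw [swapOn_insert_self, bnd_self]

end Main
lemma key_left (q : ℂ) (μ M ν : ℕ) (w w' : ℕ → ℂ) :
    (∑ σ1 ∈ (Finset.Ico μ M).powerset, ∑ σ2 ∈ (Finset.Ico (M + 1) ν).powerset,
      (∏ j ∈ σ1 ∪ σ2, Hex M q j (w' j) (w j)) *
        ((∏ j ∈ Finset.Ico μ M,
            (q * swapOn (σ1 ∪ σ2) w w' j - swapOn (σ1 ∪ σ2) w' w (j + 1)) *
              (swapOn (σ1 ∪ σ2) w' w j - q * swapOn (σ1 ∪ σ2) w w' (j + 1))) *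
          ∏ j ∈ Finset.Ico M (ν - 1),
            (swapOn (σ1 ∪ σ2) w w' j - q * swapOn (σ1 ∪ σ2) w' w (j + 1)) *
              (q * swapOn (σ1 ∪ σ2) w' w j - swapOn (σ1 ∪ σ2) w w' (j + 1))))
      = SA q μ M w w' (w M) (w' M) * SB q M ν w w' (w M) (w' M) := by
  rw [SA, SB, Finset.sum_mul_sum]
  refine Finset.sum_congr rfl fun σ1 hσ1 => Finset.sum_congr rfl fun σ2 hσ2 => ?_
  have hs1 : σ1 ⊆ Finset.Ico μ M := Finset.mem_powerset.mp hσ1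
  have hs2 : σ2 ⊆ Finset.Ico (M + 1) ν := Finset.mem_powerset.mp hσ2
  have hd : Disjoint σ1 σ2 := by
    rw [Finset.disjoint_left]
    intro k h1 h2
    have e1 := hs1 h1
    have e2 := hs2 h2
    simp only [Finset.mem_Ico] at e1 e2
    omega
  have hc : ∏ j ∈ σ1 ∪ σ2, Hex M q j (w' j) (w j)
      = (∏ j ∈ σ1, Hb q (w' j) (w j)) * ∏ j ∈ σ2, Hf q (w' j) (w j) := by
    rw [Finset.prod_union hd]
    congr 1
    · refine Finset.prod_congr rfl fun j hj => ?_
      have hjm := hs1 hj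
      simp only [Finset.mem_Ico] at hjm
      simp [Hex, hjm.2]
    · refine Finset.prod_congr rfl fun j hj => ?_
      have hjm := hs2 hj
      simp only [Finset.mem_Ico] at hjm
      have h1 : ¬ j < M := by omega
      have h2 : j ≠ M := by omega
      simp [Hex, h1, h2]
  have hA : (∏ j ∈ Finset.Ico μ M,
        (q * swapOn (σ1 ∪ σ2) w w' j - swapOn (σ1 ∪ σ2) w' w (j + 1)) *
          (swapOn (σ1 ∪ σ2) w' w j - q * swapOn (σ1 ∪ σ2) w w' (j + 1)))
      = ∏ j ∈ Finset.Ico μ M,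
          (q * bnd M (w M) (swapOn σ1 w w') j - bnd M (w' M) (swapOn σ1 w' w) (j + 1)) *
            (bnd M (w' M) (swapOn σ1 w' w) j - q * bnd M (w M) (swapOn σ1 w w') (j + 1)) := by
    refine Finset.prod_congr rfl fun j hj => ?_
    simp only [Finset.mem_Ico] at hj
    rw [swap_union_left hs1 hs2 w w' (show j ≤ M by omega),
      swap_union_left hs1 hs2 w w' (show j + 1 ≤ M by omega),
      swap_union_left hs1 hs2 w' w (show j ≤ M by omega),
      swap_union_left hs1 hs2 w' w (show j + 1 ≤ M by omega)]
  have hB : (∏ j ∈ Finset.Ico M (ν - 1),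
        (swapOn (σ1 ∪ σ2) w w' j - q * swapOn (σ1 ∪ σ2) w' w (j + 1)) *
          (q * swapOn (σ1 ∪ σ2) w' w j - swapOn (σ1 ∪ σ2) w w' (j + 1)))
      = ∏ j ∈ Finset.Ico M (ν - 1),
          (bnd M (w M) (swapOn σ2 w w') j - q * bnd M (w' M) (swapOn σ2 w' w) (j + 1)) *
            (q * bnd M (w' M) (swapOn σ2 w' w) j - bnd M (w M) (swapOn σ2 w w') (j + 1)) := by
    refine Finset.prod_congr rfl fun j hj => ?_
    simp only [Finset.mem_Ico] at hj
    rw [swap_union_right hs1 hs2 w w' (show M ≤ j by omega),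
      swap_union_right hs1 hs2 w w' (show M ≤ j + 1 by omega),
      swap_union_right hs1 hs2 w' w (show M ≤ j by omega),
      swap_union_right hs1 hs2 w' w (show M ≤ j + 1 by omega)]
  rw [hc, hA, hB]
  ring

lemma key_right (q : ℂ) (μ M ν : ℕ) (w w' : ℕ → ℂ) :
    (∑ σ1 ∈ (Finset.Ico μ M).powerset, ∑ σ2 ∈ (Finset.Ico (M + 1) ν).powerset,
      (∏ j ∈ insert M (σ1 ∪ σ2), Hex M q j (w' j) (w j)) *
        ((∏ j ∈ Finset.Ico μ M,
            (q * swapOn (insert M (σ1 ∪ σ2)) w w' j -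
                swapOn (insert M (σ1 ∪ σ2)) w' w (j + 1)) *
              (swapOn (insert M (σ1 ∪ σ2)) w' w j -
                q * swapOn (insert M (σ1 ∪ σ2)) w w' (j + 1))) *
          ∏ j ∈ Finset.Ico M (ν - 1),
            (swapOn (insert M (σ1 ∪ σ2)) w w' j -
                q * swapOn (insert M (σ1 ∪ σ2)) w' w (j + 1)) *
              (q * swapOn (insert M (σ1 ∪ σ2)) w' w j -
                swapOn (insert M (σ1 ∪ σ2)) w w' (j + 1))))
      = -1 * (SA q μ M w w' (w' M) (w M) * SB q M ν w w' (w' M) (w M)) := by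
  rw [SA, SB, Finset.sum_mul_sum]
  rw [Finset.mul_sum]
  refine Finset.sum_congr rfl fun σ1 hσ1 => ?_
  rw [Finset.mul_sum]
  refine Finset.sum_congr rfl fun σ2 hσ2 => ?_
  have hs1 : σ1 ⊆ Finset.Ico μ M := Finset.mem_powerset.mp hσ1
  have hs2 : σ2 ⊆ Finset.Ico (M + 1) ν := Finset.mem_powerset.mp hσ2
  have hd : Disjoint σ1 σ2 := by
    rw [Finset.disjoint_left]
    intro k h1 h2
    have e1 := hs1 h1
    have e2 := hs2 h2
    simp only [Finset.mem_Ico] at e1 e2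
    omega
  have hMnm : M ∉ σ1 ∪ σ2 := by
    intro hm
    rcases Finset.mem_union.mp hm with h | h
    · have := hs1 h; simp only [Finset.mem_Ico] at this; omega
    · have := hs2 h; simp only [Finset.mem_Ico] at this; omega
  have hc : ∏ j ∈ insert M (σ1 ∪ σ2), Hex M q j (w' j) (w j)
      = -1 * ((∏ j ∈ σ1, Hb q (w' j) (w j)) * ∏ j ∈ σ2, Hf q (w' j) (w j)) := by
    rw [Finset.prod_insert hMnm, Finset.prod_union hd]
    have hM : Hex M q M (w' M) (w M) = -1 := by simp [Hex]
    rw [hM]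
    congr 2
    · refine Finset.prod_congr rfl fun j hj => ?_
      have hjm := hs1 hj
      simp only [Finset.mem_Ico] at hjm
      simp [Hex, hjm.2]
    · refine Finset.prod_congr rfl fun j hj => ?_
      have hjm := hs2 hj
      simp only [Finset.mem_Ico] at hjm
      have h1 : ¬ j < M := by omega
      have h2 : j ≠ M := by omega
      simp [Hex, h1, h2]
  have hA : (∏ j ∈ Finset.Ico μ M,
        (q * swapOn (insert M (σ1 ∪ σ2)) w w' j - swapOn (insert M (σ1 ∪ σ2)) w' w (j + 1)) *
          (swapOn (insert M (σ1 ∪ σ2)) w' w j - q * swapOn (insert M (σ1 ∪ σ2)) w w' (j + 1)))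
      = ∏ j ∈ Finset.Ico μ M,
          (q * bnd M (w' M) (swapOn σ1 w w') j - bnd M (w M) (swapOn σ1 w' w) (j + 1)) *
            (bnd M (w M) (swapOn σ1 w' w) j - q * bnd M (w' M) (swapOn σ1 w w') (j + 1)) := by
    refine Finset.prod_congr rfl fun j hj => ?_
    simp only [Finset.mem_Ico] at hj
    rw [swap_union_left_insert hs1 hs2 w w' (show j ≤ M by omega),
      swap_union_left_insert hs1 hs2 w w' (show j + 1 ≤ M by omega),
      swap_union_left_insert hs1 hs2 w' w (show j ≤ M by omega),
      swap_union_left_insert hs1 hs2 w' w (show j + 1 ≤ M by omega)]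
  have hB : (∏ j ∈ Finset.Ico M (ν - 1),
        (swapOn (insert M (σ1 ∪ σ2)) w w' j - q * swapOn (insert M (σ1 ∪ σ2)) w' w (j + 1)) *
          (q * swapOn (insert M (σ1 ∪ σ2)) w' w j - swapOn (insert M (σ1 ∪ σ2)) w w' (j + 1)))
      = ∏ j ∈ Finset.Ico M (ν - 1),
          (bnd M (w' M) (swapOn σ2 w w') j - q * bnd M (w M) (swapOn σ2 w' w) (j + 1)) *
            (q * bnd M (w M) (swapOn σ2 w' w) j - bnd M (w' M) (swapOn σ2 w w') (j + 1)) := by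
    refine Finset.prod_congr rfl fun j hj => ?_
    simp only [Finset.mem_Ico] at hj
    rw [swap_union_right_insert hs1 hs2 w w' (show M ≤ j by omega),
      swap_union_right_insert hs1 hs2 w w' (show M ≤ j + 1 by omega),
      swap_union_right_insert hs1 hs2 w' w (show M ≤ j by omega),
      swap_union_right_insert hs1 hs2 w' w (show M ≤ j + 1 by omega)]
  rw [hc, hA, hB]
  ring
/-- Proposition 2 : for `1 ≤ μ ≤ M` and `M+1 ≤ ν ≤ M+N`,
`Π_{j=μ}^{M−1} (q w_j − w_{j+1}')(w_j' − q w_{j+1}) ·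
 Π_{j=M}^{ν−2} (w_j − q w_{j+1}')(q w_j' − w_{j+1}) ∼ 0`
with respect to the pairs `(w_μ, w_μ'), …, (w_{ν−1}, w_{ν−1}')`. -/
theorem proposition2 (M N : ℕ) (hM : 1 ≤ M) (hN : 1 ≤ N)
    (μ ν : ℕ) (hμ1 : 1 ≤ μ) (hμ2 : μ ≤ M) (hν1 : M + 1 ≤ ν) (hν2 : ν ≤ M + N)
    (q : ℂ) (hq : q ≠ 0) (hq2 : q ^ 2 ≠ 1) (w w' : ℕ → ℂ)
    (hden : ∀ j ∈ Finset.Ico μ ν,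
      (j < M → q ^ 2 * w' j ≠ w j) ∧ (M < j → q ^ 2 * w j ≠ w' j)) :
    WeakEq (Finset.Ico μ ν) (Hex M q) w w'
      (fun u u' =>
        (∏ j ∈ Finset.Ico μ M, (q * u j - u' (j + 1)) * (u' j - q * u (j + 1))) *
          ∏ j ∈ Finset.Ico M (ν - 1), (u j - q * u' (j + 1)) * (q * u' j - u (j + 1)))
      (fun _ _ => 0) := by
  classical
  obtain ⟨n2, rfl⟩ : ∃ n2, ν = M + 1 + n2 := ⟨ν - (M + 1), by omega⟩
  obtain ⟨n1, rfl⟩ : ∃ n1, M = μ + n1 := ⟨M - μ, by omega⟩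
  unfold WeakEq
  simp only [mul_zero, Finset.sum_const_zero]
  have hsplit : Finset.Ico μ (μ + n1 + 1 + n2)
      = insert (μ + n1)
          (Finset.Ico μ (μ + n1) ∪ Finset.Ico (μ + n1 + 1) (μ + n1 + 1 + n2)) := by
    ext k
    simp only [Finset.mem_Ico, Finset.mem_insert, Finset.mem_union]
    omega
  have hMnm : (μ + n1) ∉
      Finset.Ico μ (μ + n1) ∪ Finset.Ico (μ + n1 + 1) (μ + n1 + 1 + n2) := by
    simp only [Finset.mem_union, Finset.mem_Ico]
    omega
  have hdisj : Disjoint (Finset.Ico μ (μ + n1))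
      (Finset.Ico (μ + n1 + 1) (μ + n1 + 1 + n2)) := by
    rw [Finset.disjoint_left]
    intro k h1 h2
    simp only [Finset.mem_Ico] at h1 h2
    omega
  rw [hsplit, Finset.sum_powerset_insert hMnm, sum_powerset_union _ _ hdisj,
    sum_powerset_union _ _ hdisj, key_left q μ (μ + n1) (μ + n1 + 1 + n2) w w',
    key_right q μ (μ + n1) (μ + n1 + 1 + n2) w w']
  have hSA : SA q μ (μ + n1) w w' (w' (μ + n1)) (w (μ + n1))
      = SA q μ (μ + n1) w w' (w (μ + n1)) (w' (μ + n1)) := by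
    refine SA_symm q μ w w' n1 _ _ fun j h1 h2 => ?_
    exact (hden j (Finset.mem_Ico.mpr ⟨h1, by omega⟩)).1 (by omega)
  have hSB : SB q (μ + n1) (μ + n1 + 1 + n2) w w' (w' (μ + n1)) (w (μ + n1))
      = SB q (μ + n1) (μ + n1 + 1 + n2) w w' (w (μ + n1)) (w' (μ + n1)) := by
    refine SB_symm q w w' n2 (μ + n1) _ _ fun j h1 h2 => ?_
    exact (hden j (Finset.mem_Ico.mpr ⟨by omega, by omega⟩)).2 (by omega)
  rw [hSA, hSB]
  ring
end

section
/- Proposition 3, first group. Let M ≥ 2 be an integer, N ≥ 1, and let μ be an integer with 1 ≤ μ ≤ M−1. Set P_L = Π_{j=μ}^{M−2} (q w_j − w_{j+1}')(w_j' − q w_{j+1}) and S_L = 2^{−(M−μ)} Π_{j=μ}^{M−1} (w_j' − q² w_j)(w_j − w_j'). Then, with respect to the pairs (w_μ, w_μ'), …, (w_{M−1}, w_{M−1}'), all carrying the bosonic exchange factor H^b, the following weak equalities hold: (w_μ' − q² w_μ) P_L ∼ 0; (w_μ' − q² w_μ) P_L w_{M−1} ∼ S_L; (w_μ' − q² w_μ)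 P_L w_{M−1}' ∼ −S_L; P_L (w_{M−1}' − q² w_{M−1}) ∼ 0; w_μ P_L (w_{M−1}' − q² w_{M−1}) ∼ S_L; and w_μ' P_L (w_{M−1}' − q² w_{M−1}) ∼ −S_L. -/
/-- `P_L = Π_{j=μ}^{M−2} (q w_j − w_{j+1}')(w_j' − q w_{j+1})`. -/
noncomputable def PL (q : ℂ) (μ M : ℕ) (u u' : ℕ → ℂ) : ℂ :=
  ∏ j ∈ Finset.Ico μ (M - 1), (q * u j - u' (j + 1)) * (u' j - q * u (j + 1))

/-- `S_L = 2^{−(M−μ)} Π_{j=μ}^{M−1} (w_j' − q² w_j)(w_j − w_j')`. -/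
noncomputable def SL (q : ℂ) (μ M : ℕ) (u u' : ℕ → ℂ) : ℂ :=
  (1 / 2 ^ (M - μ)) * ∏ j ∈ Finset.Ico μ M, (u' j - q ^ 2 * u j) * (u j - u' j)

/-!
For one bosonic pair `(x, x')` the exchange factor satisfies
`H^b(x', x) (x - q² x') = -(x' - q² x)`, so symmetrizing `(x' - q² x) A(x, x')` over that pair
gives `(x' - q² x) (A(x, x') - A(x', x))`. At the end pair of the chain `P_L`, with neighbour
`(b, b')`, this turns `(x' - q² x)(q x - b')(x' - q b)` into `(x' - q² x)(x - x') (b' - q² b)`: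
the factor `w_j' - q² w_j` moves one step along the chain and leaves the weight
`(w_j' - q² w_j)(w_j - w_j')` behind. Once it reaches the other end, the remaining factor `1`,
`w` or `w'` of that pair contributes `0`, `x - x'` or `x' - x`. Symmetrizing `S_L` produces the
same weights, since each factor of `S_L` is doubled.
-/

open Finset Function

noncomputable def symmetrize (J : Finset ℕ) (H : ℕ → ℂ → ℂ → ℂ) (w w' : ℕ → ℂ)
    (F : (ℕ → ℂ) → (ℕ → ℂ) → ℂ) : ℂ :=
  ∑ σ ∈ J.powerset, (∏ j ∈ σ, H j (w' j) (w j)) * F (swapOn σ w w') (swapOn σ w' w)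

section Symmetrize

variable {J : Finset ℕ} {H : ℕ → ℂ → ℂ → ℂ} {w w' : ℕ → ℂ}

theorem weakEq_iff {F G : (ℕ → ℂ) → (ℕ → ℂ) → ℂ} :
    WeakEq J H w w' F G ↔ symmetrize J H w w' F = symmetrize J H w w' G :=
  Iff.rfl

theorem swapOn_empty : swapOn ∅ w w' = w := rfl

theorem swapOn_of_notMem {σ : Finset ℕ} {j : ℕ} (h : j ∉ σ) : swapOn σ w w' j = w j := by
  simp [swapOn, h]

theorem swapOn_of_mem {σ : Finset ℕ} {j : ℕ} (h : j ∈ σ) : swapOn σ w w' j = w' j := by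
  simp [swapOn, h]

theorem update_swapOn_of_notMem {σ : Finset ℕ} {j : ℕ} (h : j ∉ σ) :
    update (swapOn σ w w') j (w j) = swapOn σ w w' := by
  simp [swapOn_of_notMem h]

theorem swapOn_insert (σ : Finset ℕ) (j : ℕ) :
    swapOn (insert j σ) w w' = update (swapOn σ w w') j (w' j) := by
  funext i
  rcases eq_or_ne i j with rfl | h
  · simp [swapOn]
  · simp [swapOn, h]

theorem symmetrize_const_mul (c : ℂ) (F : (ℕ → ℂ) → (ℕ → ℂ) → ℂ) :
    symmetrize J H w w' (fun u u' => c * F u u') = c * symmetrize J H w w' F := by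
  simp only [symmetrize, mul_sum]
  exact sum_congr rfl fun _ _ => by ring

theorem symmetrize_zero : symmetrize J H w w' (fun _ _ => 0) = 0 := by
  simp [symmetrize]

theorem symmetrize_neg (F : (ℕ → ℂ) → (ℕ → ℂ) → ℂ) :
    symmetrize J H w w' (fun u u' => -F u u') = -symmetrize J H w w' F := by
  simpa using symmetrize_const_mul (-1) F

theorem symmetrize_insert {j : ℕ} (hj : j ∉ J) (F : (ℕ → ℂ) → (ℕ → ℂ) → ℂ) :
    symmetrize (insert j J) H w w' F =
      symmetrize J H w w' (fun u u' => F (update u j (w j)) (update u' j (w' j)) +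
        H j (w' j) (w j) * F (update u j (w' j)) (update u' j (w j))) := by
  rw [symmetrize, sum_powerset_insert hj, ← sum_add_distrib]
  refine sum_congr rfl fun σ hσ => ?_
  have hjσ : j ∉ σ := fun h => hj (mem_powerset.mp hσ h)
  rw [prod_insert hjσ, swapOn_insert, swapOn_insert]
  beta_reduce
  rw [update_swapOn_of_notMem hjσ, update_swapOn_of_notMem hjσ]
  ring

theorem symmetrize_singleton (j : ℕ) (F : (ℕ → ℂ) → (ℕ → ℂ) → ℂ) :
    symmetrize {j} H w w' F =
      F w w' + H j (w' j) (w j) * F (update w j (w' j)) (update w' j (w j)) := by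
  rw [← insert_empty_eq, symmetrize_insert (notMem_empty j)]
  simp [symmetrize, swapOn_empty, update_eq_self]

theorem symmetrize_prod (f : ℕ → ℂ → ℂ → ℂ) :
    symmetrize J H w w' (fun u u' => ∏ j ∈ J, f j (u j) (u' j)) =
      ∏ j ∈ J, (f j (w j) (w' j) + H j (w' j) (w j) * f j (w' j) (w j)) := by
  simp_rw [add_comm (f _ _ _), prod_add, symmetrize]
  refine sum_congr rfl fun σ hσ => ?_
  rw [mem_powerset] at hσ
  have hin : ∏ j ∈ σ, f j (swapOn σ w w' j) (swapOn σ w' w j) =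
      ∏ j ∈ σ, f j (w' j) (w j) :=
    prod_congr rfl fun j hj => by rw [swapOn_of_mem hj, swapOn_of_mem hj]
  have hout : ∏ j ∈ J \ σ, f j (swapOn σ w w' j) (swapOn σ w' w j) =
      ∏ j ∈ J \ σ, f j (w j) (w' j) :=
    prod_congr rfl fun j hj => by
      rw [swapOn_of_notMem (mem_sdiff.mp hj).2, swapOn_of_notMem (mem_sdiff.mp hj).2]
  rw [← prod_sdiff hσ, hin, hout, prod_mul_distrib]
  ring

end Symmetrize

def pairWeight (q x x' : ℂ) : ℂ := (x' - q ^ 2 * x) * (x - x')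

section Bosonic

variable {q : ℂ}

theorem Hb_mul_sub {x x' : ℂ} (h : q ^ 2 * x' ≠ x) :
    Hb q x' x * (x - q ^ 2 * x') = -(x' - q ^ 2 * x) := by
  have : q ^ 2 * x' - x ≠ 0 := sub_ne_zero.mpr h
  rw [Hb]
  field_simp
  ring

theorem sub_mul_add_Hb_mul {x x' : ℂ} (h : q ^ 2 * x' ≠ x) (A B : ℂ) :
    (x' - q ^ 2 * x) * A + Hb q x' x * ((x - q ^ 2 * x') * B) = (x' - q ^ 2 * x) * (A - B) := by
  linear_combination B * Hb_mul_sub h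

variable {w w' : ℕ → ℂ} {μ M : ℕ}

theorem symmetrize_SL (hden : ∀ j ∈ Ico μ M, q ^ 2 * w' j ≠ w j) :
    symmetrize (Ico μ M) (fun _ => Hb q) w w' (SL q μ M) =
      ∏ j ∈ Ico μ M, pairWeight q (w j) (w' j) := by
  have hpair : ∀ j ∈ Ico μ M, pairWeight q (w j) (w' j) +
      Hb q (w' j) (w j) * pairWeight q (w' j) (w j) = 2 * pairWeight q (w j) (w' j) :=
    fun j hj => by
      unfold pairWeight
      linear_combination (w' j - w j) * Hb_mul_sub (hden j hj)
  change symmetrize _ _ w w'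
    (fun u u' => 1 / 2 ^ (M - μ) * ∏ j ∈ Ico μ M, pairWeight q (u j) (u' j)) = _
  rw [symmetrize_const_mul, symmetrize_prod (fun _ => pairWeight q), prod_congr rfl hpair,
    prod_mul_distrib, prod_const, Nat.card_Ico]
  field_simp

theorem PL_self (u u' : ℕ → ℂ) : PL q μ (μ + 1) u u' = 1 := by
  simp [PL]

theorem PL_update_bottom (h : μ + 1 < M) (u u' : ℕ → ℂ) (x x' : ℂ) :
    PL q μ M (update u μ x) (update u' μ x') =
      (q * x - u' (μ + 1)) * (x' - q * u (μ + 1)) * PL q (μ + 1) M u u' := by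
  unfold PL
  rw [prod_eq_prod_Ico_succ_bot (by omega)]
  simp only [update_self, update_of_ne (show μ + 1 ≠ μ by omega)]
  congr 1
  refine prod_congr rfl fun j hj => ?_
  have := (mem_Ico.mp hj).1
  rw [update_of_ne (by omega), update_of_ne (by omega), update_of_ne (by omega),
    update_of_ne (by omega)]

theorem PL_update_top {n : ℕ} (h : μ ≤ n) (u u' : ℕ → ℂ) (x x' : ℂ) :
    PL q μ (n + 1 + 1) (update u (n + 1) x) (update u' (n + 1) x') =
      PL q μ (n + 1) u u' * ((q * u n - x') * (u' n - q * x)) := by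
  unfold PL
  rw [Nat.add_sub_cancel, Nat.add_sub_cancel, prod_Ico_succ_top h]
  simp only [update_self, update_of_ne (show n ≠ n + 1 by omega)]
  congr 1
  refine prod_congr rfl fun j hj => ?_
  have := (mem_Ico.mp hj).2
  rw [update_of_ne (by omega), update_of_ne (by omega), update_of_ne (by omega),
    update_of_ne (by omega)]

theorem symmetrize_bottom_chain (r : ℂ → ℂ → ℂ) {n : ℕ} (hμn : μ ≤ n)
    (hden : ∀ j ∈ Ico μ (n + 1), q ^ 2 * w' j ≠ w j) :
    symmetrize (Ico μ (n + 1)) (fun _ => Hb q) w w'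
        (fun u u' => (u' μ - q ^ 2 * u μ) * PL q μ (n + 1) u u' * r (u n) (u' n)) =
      (∏ j ∈ Ico μ n, pairWeight q (w j) (w' j)) *
        ((w' n - q ^ 2 * w n) * (r (w n) (w' n) - r (w' n) (w n))) := by
  induction hμn using Nat.decreasingInduction with
  | self =>
    rw [Nat.Ico_succ_singleton, symmetrize_singleton, Ico_self, prod_empty, one_mul]
    simp only [PL_self, update_self, mul_one]
    exact sub_mul_add_Hb_mul (hden n (by simp)) _ _
  | of_succ k hk ih =>
    have hpeel : ∀ u u' : ℕ → ℂ,
        (w' k - q ^ 2 * w k) * PL q k (n + 1) (update u k (w k)) (update u' k (w' k)) *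
            r (update u k (w k) n) (update u' k (w' k) n) +
          Hb q (w' k) (w k) * ((w k - q ^ 2 * w' k) *
            PL q k (n + 1) (update u k (w' k)) (update u' k (w k)) *
            r (update u k (w' k) n) (update u' k (w k) n)) =
        pairWeight q (w k) (w' k) *
          ((u' (k + 1) - q ^ 2 * u (k + 1)) * PL q (k + 1) (n + 1) u u' * r (u n) (u' n)) := by
      intro u u'
      simp only [PL_update_bottom (show k + 1 < n + 1 by omega),
        update_of_ne (show n ≠ k by omega)]
      unfold pairWeight
      linear_combination ((q * w' k - u' (k + 1)) * (w k - q * u (k + 1)) *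
        PL q (k + 1) (n + 1) u u' * r (u n) (u' n)) * Hb_mul_sub (hden k (by simp; omega))
    rw [← insert_Ico_add_one_left_eq_Ico (show k < n + 1 by omega), symmetrize_insert (by simp)]
    simp only [update_self, hpeel]
    rw [symmetrize_const_mul, ih fun j hj => hden j (by simp at hj ⊢; omega),
      prod_eq_prod_Ico_succ_bot hk]
    ring

theorem symmetrize_top_chain (r : ℂ → ℂ → ℂ) {n : ℕ} (hμn : μ ≤ n)
    (hden : ∀ j ∈ Ico μ (n + 1), q ^ 2 * w' j ≠ w j) :
    symmetrize (Ico μ (n + 1)) (fun _ => Hb q) w w'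
        (fun u u' => r (u μ) (u' μ) * PL q μ (n + 1) u u' * (u' n - q ^ 2 * u n)) =
      (w' μ - q ^ 2 * w μ) * (r (w μ) (w' μ) - r (w' μ) (w μ)) *
        ∏ j ∈ Ico (μ + 1) (n + 1), pairWeight q (w j) (w' j) := by
  induction n, hμn using Nat.le_induction with
  | base =>
    rw [Nat.Ico_succ_singleton, symmetrize_singleton, Ico_self, prod_empty, mul_one]
    simp only [PL_self, update_self, mul_one]
    linear_combination r (w' μ) (w μ) * Hb_mul_sub (hden μ (by simp))
  | succ n hμn ih =>
    have hpeel : ∀ u u' : ℕ → ℂ,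
        r (update u (n + 1) (w (n + 1)) μ) (update u' (n + 1) (w' (n + 1)) μ) *
            PL q μ (n + 1 + 1) (update u (n + 1) (w (n + 1))) (update u' (n + 1) (w' (n + 1))) *
            (w' (n + 1) - q ^ 2 * w (n + 1)) +
          Hb q (w' (n + 1)) (w (n + 1)) *
            (r (update u (n + 1) (w' (n + 1)) μ) (update u' (n + 1) (w (n + 1)) μ) *
            PL q μ (n + 1 + 1) (update u (n + 1) (w' (n + 1))) (update u' (n + 1) (w (n + 1))) *
            (w (n + 1) - q ^ 2 * w' (n + 1))) =
        pairWeight q (w (n + 1)) (w' (n + 1)) *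
          (r (u μ) (u' μ) * PL q μ (n + 1) u u' * (u' n - q ^ 2 * u n)) := by
      intro u u'
      simp only [PL_update_top hμn, update_of_ne (show μ ≠ n + 1 by omega)]
      unfold pairWeight
      linear_combination (r (u μ) (u' μ) * PL q μ (n + 1) u u' *
        ((q * u n - w (n + 1)) * (u' n - q * w' (n + 1)))) *
          Hb_mul_sub (hden (n + 1) (by simp; omega))
    rw [← insert_Ico_right_eq_Ico_add_one (show μ ≤ n + 1 by omega),
      symmetrize_insert (by simp)]
    simp only [update_self, hpeel]
    rw [symmetrize_const_mul, ih fun j hj => hden j (by simp at hj ⊢; omega),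
      prod_Ico_succ_top (show μ + 1 ≤ n + 1 by omega)]
    ring

end Bosonic

theorem proposition3_first_general (M : ℕ) (hM : 2 ≤ M)
    (μ : ℕ) (hμ2 : μ ≤ M - 1)
    (q : ℂ) (w w' : ℕ → ℂ)
    (hden : ∀ j ∈ Finset.Ico μ M, q ^ 2 * w' j ≠ w j) :
    WeakEq (Finset.Ico μ M) (fun _ => Hb q) w w'
      (fun u u' => (u' μ - q ^ 2 * u μ) * PL q μ M u u') (fun _ _ => 0) ∧
    WeakEq (Finset.Ico μ M) (fun _ => Hb q) w w'
      (fun u u' => (u' μ - q ^ 2 * u μ) * PL q μ M u u' * u (M - 1))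
      (fun u u' => SL q μ M u u') ∧
    WeakEq (Finset.Ico μ M) (fun _ => Hb q) w w'
      (fun u u' => (u' μ - q ^ 2 * u μ) * PL q μ M u u' * u' (M - 1))
      (fun u u' => -SL q μ M u u') ∧
    WeakEq (Finset.Ico μ M) (fun _ => Hb q) w w'
      (fun u u' => PL q μ M u u' * (u' (M - 1) - q ^ 2 * u (M - 1))) (fun _ _ => 0) ∧
    WeakEq (Finset.Ico μ M) (fun _ => Hb q) w w'
      (fun u u' => u μ * PL q μ M u u' * (u' (M - 1) - q ^ 2 * u (M - 1)))
      (fun u u' => SL q μ M u u') ∧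
    WeakEq (Finset.Ico μ M) (fun _ => Hb q) w w'
      (fun u u' => u' μ * PL q μ M u u' * (u' (M - 1) - q ^ 2 * u (M - 1)))
      (fun u u' => -SL q μ M u u') := by
  obtain ⟨n, rfl⟩ : ∃ n, M = n + 1 := ⟨M - 1, by omega⟩
  rw [Nat.add_sub_cancel] at hμ2 ⊢
  have hbot := fun r => symmetrize_bottom_chain r hμ2 hden
  have htop := fun r => symmetrize_top_chain r hμ2 hden
  have hSL_top := prod_Ico_succ_top hμ2 fun j => pairWeight q (w j) (w' j)
  have hSL_bot := prod_eq_prod_Ico_succ_bot (Nat.lt_succ_of_le hμ2)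
    fun j => pairWeight q (w j) (w' j)
  simp only [weakEq_iff, symmetrize_zero, symmetrize_neg, symmetrize_SL hden]
  refine ⟨?_, ?_, ?_, ?_, ?_, ?_⟩
  · simpa only [mul_one, sub_self, mul_zero] using hbot fun _ _ => 1
  · rw [hSL_top]
    exact hbot fun x _ => x
  · rw [hSL_top, hbot fun _ x' => x', pairWeight]
    ring
  · simpa only [one_mul, sub_self, mul_zero, zero_mul] using htop fun _ _ => 1
  · rw [hSL_bot]
    exact htop fun x _ => x
  · rw [hSL_bot, htop fun _ x' => x', pairWeight]
    ring

/-- Proposition 3, first group: six weak equalities for the bosonic pairs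
`(w_μ, w_μ'), …, (w_{M−1}, w_{M−1}')`. -/
theorem proposition3_first (M N : ℕ) (hM : 2 ≤ M) (hN : 1 ≤ N)
    (μ : ℕ) (hμ1 : 1 ≤ μ) (hμ2 : μ ≤ M - 1)
    (q : ℂ) (hq : q ≠ 0) (hq2 : q ^ 2 ≠ 1) (w w' : ℕ → ℂ)
    (hden : ∀ j ∈ Finset.Ico μ M, q ^ 2 * w' j ≠ w j) :
    WeakEq (Finset.Ico μ M) (fun _ => Hb q) w w'
      (fun u u' => (u' μ - q ^ 2 * u μ) * PL q μ M u u') (fun _ _ => 0) ∧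
    WeakEq (Finset.Ico μ M) (fun _ => Hb q) w w'
      (fun u u' => (u' μ - q ^ 2 * u μ) * PL q μ M u u' * u (M - 1))
      (fun u u' => SL q μ M u u') ∧
    WeakEq (Finset.Ico μ M) (fun _ => Hb q) w w'
      (fun u u' => (u' μ - q ^ 2 * u μ) * PL q μ M u u' * u' (M - 1))
      (fun u u' => -SL q μ M u u') ∧
    WeakEq (Finset.Ico μ M) (fun _ => Hb q) w w'
      (fun u u' => PL q μ M u u' * (u' (M - 1) - q ^ 2 * u (M - 1))) (fun _ _ => 0) ∧
    WeakEq (Finset.Ico μ M) (fun _ => Hb q) w w'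
      (fun u u' => u μ * PL q μ M u u' * (u' (M - 1) - q ^ 2 * u (M - 1)))
      (fun u u' => SL q μ M u u') ∧
    WeakEq (Finset.Ico μ M) (fun _ => Hb q) w w'
      (fun u u' => u' μ * PL q μ M u u' * (u' (M - 1) - q ^ 2 * u (M - 1)))
      (fun u u' => -SL q μ M u u') :=
  proposition3_first_general M hM μ hμ2 q w w' hden
end

section
/- Proposition 1, first case. Let M, N be positive integers and let μ, ν be integers with 1 ≤ μ ≤ M and M+1 ≤ ν ≤ M+N. Write Q = Π_{j=μ}^{M−1} (q w_j − w_{j+1}')(w_j' − q w_{j+1}) · Π_{j=M}^{ν−2} (w_j − q w_{j+1}')(q w_j' − w_{j+1}). Then, with respect to the pairs (w_μ, w_μ'), …, (w_{ν−1}, w_{ν−1}') carrying the U_q(ŝl(M|N)) exchange factors, and with w_{μ−1}, w_ν further free variables, the weak equality (q w_μ − w_{μ−1}) · Q · (w_ν − q w_{ν−1}') ∼ −(w_μ' − q w_{μ−1}) · Q · (q w_ν − w_{ν−1}) holds. -/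
/-- `Q = Π_{j=μ}^{M−1} (q w_j − w_{j+1}')(w_j' − q w_{j+1}) ·
Π_{j=M}^{ν−2} (w_j − q w_{j+1}')(q w_j' − w_{j+1})`. -/
noncomputable def Qprod (q : ℂ) (M μ ν : ℕ) (u u' : ℕ → ℂ) : ℂ :=
  (∏ j ∈ Finset.Ico μ M, (q * u j - u' (j + 1)) * (u' j - q * u (j + 1))) *
    ∏ j ∈ Finset.Ico M (ν - 1), (u j - q * u' (j + 1)) * (q * u' j - u (j + 1))

open Finset

section Transfer

variable {R : Type*} [CommSemiring R]

def transferVec (c : ℕ → Bool → R) (L : Bool → R) (T : ℕ → Bool → Bool → R) (μ : ℕ) :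
    ℕ → Bool → R
  | 0 => fun e => c μ e * L e
  | n + 1 => fun f => c (μ + n + 1) f * ∑ e, transferVec c L T μ n e * T (μ + n) e f

theorem sum_transferVec_succ_mul (c : ℕ → Bool → R) (L R' : Bool → R)
    (T : ℕ → Bool → Bool → R) (μ n : ℕ) :
    ∑ f, transferVec c L T μ (n + 1) f * R' f =
      ∑ e, transferVec c L T μ n e * ∑ f, T (μ + n) e f * c (μ + n + 1) f * R' f := by
  simp only [transferVec, Fintype.sum_bool]
  ring

theorem sum_powerset_Ico_chain_eq_sum_transferVec (c : ℕ → Bool → R) (L : Bool → R)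
    (T : ℕ → Bool → Bool → R) (μ n : ℕ) (R' : Bool → R) :
    ∑ σ ∈ (Ico μ (μ + n + 1)).powerset,
      (∏ j ∈ Ico μ (μ + n + 1), c j (decide (j ∈ σ))) * L (decide (μ ∈ σ)) *
        (∏ j ∈ Ico μ (μ + n), T j (decide (j ∈ σ)) (decide (j + 1 ∈ σ))) *
          R' (decide (μ + n ∈ σ)) =
      ∑ e, transferVec c L T μ n e * R' e := by
  induction n generalizing R' with
  | zero =>
    rw [show Ico μ (μ + 0 + 1) = insert μ ∅ by simp, sum_powerset_insert (notMem_empty μ)]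
    simp [transferVec, add_comm]
  | succ n ih =>
    have ht : μ + n + 1 ∉ Ico μ (μ + n + 1) := by simp
    rw [sum_transferVec_succ_mul, ← ih, show μ + (n + 1) = μ + n + 1 by omega,
      Nat.Ico_succ_right_eq_insert_Ico (by omega : μ ≤ μ + n + 1), sum_powerset_insert ht,
      ← sum_add_distrib]
    refine sum_congr rfl fun σ hσ => ?_
    have htσ : μ + n + 1 ∉ σ := fun h => lt_irrefl _ (mem_Ico.mp (mem_powerset.mp hσ h)).2
    have hins : ∀ j < μ + n + 1, decide (j ∈ insert (μ + n + 1) σ) = decide (j ∈ σ) :=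
      fun j hj => by simp [hj.ne]
    have hc : ∏ j ∈ Ico μ (μ + n + 1), c j (decide (j ∈ insert (μ + n + 1) σ)) =
        ∏ j ∈ Ico μ (μ + n + 1), c j (decide (j ∈ σ)) :=
      prod_congr rfl fun j hj => by rw [hins j (mem_Ico.mp hj).2]
    have hT : ∏ j ∈ Ico μ (μ + n),
          T j (decide (j ∈ insert (μ + n + 1) σ)) (decide (j + 1 ∈ insert (μ + n + 1) σ)) =
        ∏ j ∈ Ico μ (μ + n), T j (decide (j ∈ σ)) (decide (j + 1 ∈ σ)) :=
      prod_congr rfl fun j hj => by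
        have := (mem_Ico.mp hj).2
        rw [hins j (by omega), hins (j + 1) (by omega)]
    have hμn : μ ≤ μ + n := by omega
    rw [prod_insert ht, prod_insert ht, hc,
      prod_Ico_succ_top hμn fun j => T j (decide (j ∈ σ)) (decide (j + 1 ∈ σ)),
      prod_Ico_succ_top hμn fun j =>
        T j (decide (j ∈ insert (μ + n + 1) σ)) (decide (j + 1 ∈ insert (μ + n + 1) σ)),
      hT, hins μ (by omega), hins (μ + n) (by omega)]
    simp only [decide_eq_false htσ, mem_insert_self, decide_true, Fintype.sum_bool]
    ring

end Transfer

theorem prod_mul_prod_eq_prod_ite {ι β : Type*} [CommMonoid β] [DecidableEq ι]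
    {J σ : Finset ι} (hσ : σ ⊆ J) (h d n : ι → β) (hH : ∀ j ∈ J, h j * d j = n j) :
    (∏ j ∈ σ, h j) * ∏ j ∈ J, d j = ∏ j ∈ J, if j ∈ σ then n j else d j := by
  rw [← prod_sdiff hσ, ← prod_sdiff hσ (f := fun j => if j ∈ σ then n j else d j),
    prod_congr rfl fun j hj => if_neg (mem_sdiff.mp hj).2,
    prod_congr rfl fun j hj => if_pos hj, mul_left_comm, ← prod_mul_distrib,
    prod_congr rfl fun j hj => hH j (hσ hj)]

theorem weakEq_iff_sum_prod_ite_eq_zero {J : Finset ℕ} {H : ℕ → ℂ → ℂ → ℂ} {w w' : ℕ → ℂ}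
    {F G : (ℕ → ℂ) → (ℕ → ℂ) → ℂ} {d n : ℕ → ℂ} (hd : ∀ j ∈ J, d j ≠ 0)
    (hH : ∀ j ∈ J, H j (w' j) (w j) * d j = n j) :
    WeakEq J H w w' F G ↔
      ∑ σ ∈ J.powerset, (∏ j ∈ J, if j ∈ σ then n j else d j) *
        (F (swapOn σ w w') (swapOn σ w' w) - G (swapOn σ w w') (swapOn σ w' w)) = 0 := by
  rw [WeakEq, ← sub_eq_zero, ← sum_sub_distrib,
    ← mul_eq_zero_iff_left (prod_ne_zero_iff.mpr hd), mul_sum]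
  refine Eq.congr_left (sum_congr rfl fun σ hσ => ?_)
  rw [← mul_sub, ← mul_assoc, mul_comm (∏ j ∈ J, d j),
    prod_mul_prod_eq_prod_ite (mem_powerset.mp hσ) _ d n hH]

section SlMN

variable (M : ℕ) (q : ℂ) (w w' : ℕ → ℂ)

def pairVal (e : Bool) (j : ℕ) : ℂ := cond e (w' j) (w j)

def siteFactor (j : ℕ) (u v : ℂ) : ℂ :=
  if j < M then q ^ 2 * v - u else if j = M then 1 else q ^ 2 * u - v

def siteWeight (j : ℕ) (e : Bool) : ℂ :=
  cond e (-siteFactor M q j (w' j) (w j)) (siteFactor M q j (w j) (w' j))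

def linkFactor (j : ℕ) (U V u v : ℂ) : ℂ :=
  if j < M then (q * U - v) * (V - q * u) else (U - q * v) * (q * V - u)

def link (j : ℕ) (e f : Bool) : ℂ :=
  linkFactor M q j (pairVal w w' e j) (pairVal w' w e j) (pairVal w w' f (j + 1))
    (pairVal w' w f (j + 1))

def leftF (a : ℂ) (μ : ℕ) (e : Bool) : ℂ := q * pairVal w w' e μ - a

def leftG (a : ℂ) (μ : ℕ) (e : Bool) : ℂ := pairVal w' w e μ - q * a

def rightF (k : ℕ) (X C : ℂ) (e : Bool) : ℂ :=
  if k < M then q * X - C * pairVal w' w e k else X - q * C * pairVal w' w e k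

def rightG (k : ℕ) (X C : ℂ) (e : Bool) : ℂ :=
  if k < M then q * C * pairVal w w' e k - X else q * X - C * pairVal w w' e k

/-- The new parameters come from antisymmetrising in the pair `k + 1`; they involve the pair `k`
only through `w k + w' k` and `w k * w' k`, so one choice serves both of its states. -/
theorem exists_pullback_right (k : ℕ) (X C : ℂ) :
    ∃ X' C', ∀ e,
      ∑ f, link M q w w' k e f * siteWeight M q w w' (k + 1) f * rightF M q w w' (k + 1) X C f =
          rightF M q w w' k X' C' e ∧
        ∑ f, link M q w w' k e f * siteWeight M q w w' (k + 1) f *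
            rightG M q w w' (k + 1) X C f = rightG M q w w' k X' C' e := by
  obtain ⟨s, hs⟩ : ∃ s, s = w k + w' k := ⟨_, rfl⟩
  obtain ⟨p, hp⟩ : ∃ p, p = w k * w' k := ⟨_, rfl⟩
  obtain ⟨y, hy⟩ : ∃ y, y = w (k + 1) := ⟨_, rfl⟩
  obtain ⟨y', hy'⟩ : ∃ y', y' = w' (k + 1) := ⟨_, rfl⟩
  rcases lt_trichotomy (k + 1) M with hk | rfl | hk
  · refine ⟨q * (y - y') * ((q * s * (y + y') - (q ^ 2 + 1) * (p + y * y')) * X +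
        (q * (y + y') * (p + y * y') - (q ^ 2 + 1) * (y * y') * s) * C),
      -(y - y') * (q ^ 2 * y - y') * (q ^ 2 * y' - y) * C, fun e => ?_⟩
    cases e <;>
    simp only [Fintype.sum_bool, link, linkFactor, siteWeight, siteFactor, rightF, rightG,
      pairVal, cond_true, cond_false, if_pos hk, if_pos (Nat.lt_of_succ_lt hk)] <;>
    subst hs hp hy hy' <;> constructor <;> ring
  · refine ⟨q * (y - y') * ((p + y * y') * C - s * X),
      (y - y') * (q * (y + y') * C - (q ^ 2 + 1) * X), fun e => ?_⟩
    cases e <;>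
    simp only [Fintype.sum_bool, link, linkFactor, siteWeight, siteFactor, rightF, rightG,
      pairVal, cond_true, cond_false, Nat.lt_succ_self, lt_irrefl, if_true, if_false] <;>
    subst hs hp hy hy' <;> constructor <;> ring
  · have hkM : ¬k < M := by omega
    refine ⟨q * (y - y') * (((q ^ 2 + 1) * (p + y * y') - q * s * (y + y')) * X +
        ((q ^ 2 + 1) * (y * y') * s - q * (y + y') * (p + y * y')) * C),
      (y - y') * (q ^ 2 * y - y') * (q ^ 2 * y' - y) * C, fun e => ?_⟩
    cases e <;>
    simp only [Fintype.sum_bool, link, linkFactor, siteWeight, siteFactor, rightF, rightG,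
      pairVal, cond_true, cond_false, if_neg hkM, if_neg hk.not_gt, if_neg hk.ne'] <;>
    subst hs hp hy hy' <;> constructor <;> ring

theorem sum_transferVec_mul_right_eq_zero (a : ℂ) {μ : ℕ} (hμ : μ ≤ M) (n : ℕ) (X C : ℂ) :
    ∑ e, (transferVec (siteWeight M q w w') (leftF q w w' a μ) (link M q w w') μ n e *
          rightF M q w w' (μ + n) X C e +
        transferVec (siteWeight M q w w') (leftG q w w' a μ) (link M q w w') μ n e *
          rightG M q w w' (μ + n) X C e) = 0 := by
  induction n generalizing X C with
  | zero =>
    rcases hμ.lt_or_eq with hμ | rfl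
    · simp only [transferVec, Fintype.sum_bool, siteWeight, siteFactor, leftF, leftG, rightF,
        rightG, pairVal, cond_true, cond_false, add_zero, if_pos hμ]
      ring
    · simp only [transferVec, Fintype.sum_bool, siteWeight, siteFactor, leftF, leftG, rightF,
        rightG, pairVal, cond_true, cond_false, add_zero, lt_irrefl, if_true, if_false]
      ring
  | succ n ih =>
    obtain ⟨X', C', h⟩ := exists_pullback_right M q w w' (μ + n) X C
    rw [sum_add_distrib, ← add_assoc, sum_transferVec_succ_mul, sum_transferVec_succ_mul]
    simp only [fun e => (h e).1, fun e => (h e).2]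
    rw [← sum_add_distrib]
    exact ih X' C'

theorem swapOn_eq_pairVal (σ : Finset ℕ) (j : ℕ) :
    swapOn σ w w' j = pairVal w w' (decide (j ∈ σ)) j := by
  by_cases h : j ∈ σ <;> simp [swapOn, pairVal, h]

theorem siteFactor_ne_zero {j : ℕ} (h₁ : j < M → q ^ 2 * w' j ≠ w j)
    (h₂ : M < j → q ^ 2 * w j ≠ w' j) : siteFactor M q j (w j) (w' j) ≠ 0 := by
  unfold siteFactor
  split_ifs with hlt heq
  · exact sub_ne_zero.mpr (h₁ hlt)
  · exact one_ne_zero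
  · exact sub_ne_zero.mpr (h₂ (by omega))

theorem Hex_mul_siteFactor {j : ℕ} {u v : ℂ} (h : siteFactor M q j u v ≠ 0) :
    Hex M q j v u * siteFactor M q j u v = -siteFactor M q j v u := by
  unfold Hex Hb Hf siteFactor at *
  split_ifs at * with hlt heq
  · rw [div_mul_cancel₀ _ h]
  · ring
  · rw [div_mul_cancel₀ _ h]

theorem Qprod_eq_prod_linkFactor {μ k : ℕ} (hμ : μ ≤ M) (hk : M ≤ k) (u u' : ℕ → ℂ) :
    Qprod q M μ (k + 1) u u' =
      ∏ j ∈ Ico μ k, linkFactor M q j (u j) (u' j) (u (j + 1)) (u' (j + 1)) := by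
  rw [Qprod, Nat.add_sub_cancel, ← prod_Ico_consecutive _ hμ hk]
  congr 1 <;> refine prod_congr rfl fun j hj => ?_ <;> have := mem_Ico.mp hj
  · rw [linkFactor, if_pos this.2]
  · rw [linkFactor, if_neg (by omega)]

end SlMN

theorem proposition1_first_general (M : ℕ)
    (μ ν : ℕ) (hμ1 : 1 ≤ μ) (hμ2 : μ ≤ M) (hν1 : M + 1 ≤ ν)
    (q : ℂ) (w w' : ℕ → ℂ)
    (hden : ∀ j ∈ Finset.Ico μ ν,
      (j < M → q ^ 2 * w' j ≠ w j) ∧ (M < j → q ^ 2 * w j ≠ w' j)) :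
    WeakEq (Finset.Ico μ ν) (Hex M q) w w'
      (fun u u' => (q * u μ - u (μ - 1)) * Qprod q M μ ν u u' * (u ν - q * u' (ν - 1)))
      (fun u u' =>
        -((u' μ - q * u (μ - 1)) * Qprod q M μ ν u u' * (q * u ν - u (ν - 1)))) := by
  obtain ⟨n, rfl⟩ : ∃ n, ν = μ + n + 1 := ⟨ν - μ - 1, by omega⟩
  have hd j (hj : j ∈ Ico μ (μ + n + 1)) :=
    siteFactor_ne_zero M q w w' (hden j hj).1 (hden j hj).2
  rw [weakEq_iff_sum_prod_ite_eq_zero hd fun j hj => Hex_mul_siteFactor M q (hd j hj)]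
  have key := sum_transferVec_mul_right_eq_zero M q w w' (w (μ - 1)) hμ2 n (w (μ + n + 1)) 1
  rw [sum_add_distrib, ← sum_powerset_Ico_chain_eq_sum_transferVec,
    ← sum_powerset_Ico_chain_eq_sum_transferVec, ← sum_add_distrib] at key
  refine Eq.trans (sum_congr rfl fun σ hσ => ?_) key
  have hout : ∀ j, (j < μ ∨ μ + n + 1 ≤ j) → pairVal w w' (decide (j ∈ σ)) j = w j :=
    fun j hj => by
      have : j ∉ σ := fun h => by have := mem_Ico.mp (mem_powerset.mp hσ h); omega
      simp [pairVal, this]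
  rw [Qprod_eq_prod_linkFactor M q hμ2 (by omega)]
  simp only [swapOn_eq_pairVal, Nat.add_sub_cancel, hout (μ - 1) (by omega),
    hout (μ + n + 1) (by omega), siteWeight, Bool.cond_decide, link, leftF, leftG, rightF,
    rightG, if_neg (show ¬μ + n < M by omega)]
  ring

/-- Proposition 1, first case: for `1 ≤ μ ≤ M` and `M+1 ≤ ν ≤ M+N`,
`(q w_μ − w_{μ−1}) Q (w_ν − q w_{ν−1}') ∼ −(w_μ' − q w_{μ−1}) Q (q w_ν − w_{ν−1})`
with respect to the pairs `(w_μ, w_μ'), …, (w_{ν−1}, w_{ν−1}')`. -/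
theorem proposition1_first (M N : ℕ) (hM : 1 ≤ M) (hN : 1 ≤ N)
    (μ ν : ℕ) (hμ1 : 1 ≤ μ) (hμ2 : μ ≤ M) (hν1 : M + 1 ≤ ν) (hν2 : ν ≤ M + N)
    (q : ℂ) (hq : q ≠ 0) (hq2 : q ^ 2 ≠ 1) (w w' : ℕ → ℂ)
    (hden : ∀ j ∈ Finset.Ico μ ν,
      (j < M → q ^ 2 * w' j ≠ w j) ∧ (M < j → q ^ 2 * w j ≠ w' j)) :
    WeakEq (Finset.Ico μ ν) (Hex M q) w w'
      (fun u u' => (q * u μ - u (μ - 1)) * Qprod q M μ ν u u' * (u ν - q * u' (ν - 1)))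
      (fun u u' =>
        -((u' μ - q * u (μ - 1)) * Qprod q M μ ν u u' * (q * u ν - u (ν - 1)))) :=
  proposition1_first_general M μ ν hμ1 hμ2 hν1 q w w' hden
end

section
/- Proposition 5′ (fermionic case), equation (prop5:4). Let μ ≥ 2 be an integer, let w₀, w₀' be free complex variables, and let (w_j, w_j') for j = 1, …, μ−1 be pairs all carrying the fermionic exchange factor H^f. Define D(u, u') = (q u' − w₁)(q w₁' − u) · Π_{j=1}^{μ−2} (q w_j' − w_{j+1})(q w_{j+1}' − w_j). Then D(w₀', w₀) ∼ D(w₀, w₀') with respect to the pairs (w₁, w₁'), …, (w_{μ−1}, w_{μ−1}'). (This is the ŝl(0|N) case, 2 ≤ μ ≤ N.) -/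
/-- `D(u, u') = (q u' − w₁)(q w₁' − u) · Π_{j=1}^{μ−2} (q w_j' − w_{j+1})(q w_{j+1}' − w_j)`. -/
noncomputable def Dfer (q : ℂ) (μ : ℕ) (x y : ℂ) (u u' : ℕ → ℂ) : ℂ :=
  (q * y - u 1) * (q * u' 1 - x) *
    ∏ j ∈ Finset.Ico 1 (μ - 1), (q * u' j - u (j + 1)) * (q * u' (j + 1) - u j)

lemma Esym (q a b c c' : ℂ) (h : q ^ 2 * c ≠ c') :
    (q * b - c) * (q * c' - a) + Hf q c' c * ((q * b - c') * (q * c - a))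
      = (q * a - c) * (q * c' - b) + Hf q c' c * ((q * a - c') * (q * c - b)) := by
  have h' : q ^ 2 * c - c' ≠ 0 := sub_ne_zero.mpr h
  unfold Hf; field_simp; ring

lemma Dfer_congr (q : ℂ) (μ : ℕ) (x y : ℂ) (u u' v v' : ℕ → ℂ)
    (h : ∀ j < μ, u j = v j) (h' : ∀ j < μ, u' j = v' j) (hμ : 2 ≤ μ) :
    Dfer q μ x y u u' = Dfer q μ x y v v' := by
  unfold Dfer
  rw [h 1 (by omega), h' 1 (by omega)]
  congr 1
  refine Finset.prod_congr rfl fun j hj => ?_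
  simp only [Finset.mem_Ico] at hj
  rw [h j (by omega), h' j (by omega), h (j+1) (by omega), h' (j+1) (by omega)]

lemma Dfer_succ (q : ℂ) (k : ℕ) (x y : ℂ) (u u' : ℕ → ℂ) :
    Dfer q (k + 3) x y u u'
      = Dfer q (k + 2) x y u u' * ((q * u' (k + 1) - u (k + 2)) * (q * u' (k + 2) - u (k + 1))) := by
  unfold Dfer
  have h3 : k + 3 - 1 = (k + 1) + 1 := rfl
  rw [h3, Finset.prod_Ico_succ_top (by omega)]
  have h2 : k + 2 - 1 = k + 1 := rfl
  rw [h2]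
  ring

lemma key (q : ℂ) (w w' : ℕ → ℂ) :
    ∀ μ, 2 ≤ μ → (∀ j, 1 ≤ j → j < μ → q ^ 2 * w j ≠ w' j) → ∀ x y : ℂ,
    ∑ σ ∈ (Finset.Ico 1 μ).powerset, (∏ j ∈ σ, Hf q (w' j) (w j)) *
      (Dfer q μ x y (swapOn σ w w') (swapOn σ w' w)
        - Dfer q μ y x (swapOn σ w w') (swapOn σ w' w)) = 0 := by
  intro μ hμ
  induction μ, hμ using Nat.le_induction with
  | base =>
    intro hden x y
    have h1 : Finset.Ico 1 2 = insert 1 (∅ : Finset ℕ) := rfl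
    rw [h1, Finset.sum_powerset_insert (by simp)]
    simp only [Finset.powerset_empty, Finset.sum_singleton, Finset.prod_empty, one_mul,
      Finset.prod_insert (Finset.notMem_empty 1), Finset.prod_empty, mul_one]
    have hd := hden 1 le_rfl (by omega)
    have h' : q ^ 2 * w 1 - w' 1 ≠ 0 := sub_ne_zero.mpr hd
    unfold Dfer swapOn Hf
    norm_num
    field_simp
    ring
  | succ n hn ih =>
    intro hden x y
    obtain ⟨k, rfl⟩ : ∃ k, n = k + 2 := ⟨n - 2, by omega⟩
    have hnmem : (k + 2) ∉ Finset.Ico 1 (k + 2) := by simp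
    rw [show Finset.Ico 1 (k + 2 + 1) = insert (k + 2) (Finset.Ico 1 (k + 2)) by
        ext j; simp only [Finset.mem_Ico, Finset.mem_insert]; omega,
      Finset.sum_powerset_insert hnmem, ← Finset.sum_add_distrib]
    -- the constant bracket
    set n := k + 2 with hn2
    set c : ℂ := (q * w' (k + 1) - w n) * (q * w' n - w (k + 1))
        + Hf q (w' n) (w n) * ((q * w' (k + 1) - w' n) * (q * w n - w (k + 1))) with hc
    have hterm : ∀ τ ∈ (Finset.Ico 1 n).powerset,
        (∏ j ∈ τ, Hf q (w' j) (w j)) *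
          (Dfer q (n+1) x y (swapOn τ w w') (swapOn τ w' w)
            - Dfer q (n+1) y x (swapOn τ w w') (swapOn τ w' w))
        + (∏ j ∈ insert n τ, Hf q (w' j) (w j)) *
          (Dfer q (n+1) x y (swapOn (insert n τ) w w') (swapOn (insert n τ) w' w)
            - Dfer q (n+1) y x (swapOn (insert n τ) w w') (swapOn (insert n τ) w' w))
        = c * ((∏ j ∈ τ, Hf q (w' j) (w j)) *
          (Dfer q n x y (swapOn τ w w') (swapOn τ w' w)
            - Dfer q n y x (swapOn τ w w') (swapOn τ w' w))) := by
      intro τ hτ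
      rw [Finset.mem_powerset] at hτ
      have hτn : n ∉ τ := fun h => hnmem (hτ h)
      have hswap : ∀ j < n, swapOn (insert n τ) w w' j = swapOn τ w w' j := by
        intro j hj
        simp only [swapOn, Finset.mem_insert]
        rcases Finset.decidableMem j τ with h | h <;> simp [h, Nat.ne_of_lt hj]
      have hswap' : ∀ j < n, swapOn (insert n τ) w' w j = swapOn τ w' w j := by
        intro j hj
        simp only [swapOn, Finset.mem_insert]
        rcases Finset.decidableMem j τ with h | h <;> simp [h, Nat.ne_of_lt hj]
      have hDx : Dfer q n x y (swapOn (insert n τ) w w') (swapOn (insert n τ) w' w)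
          = Dfer q n x y (swapOn τ w w') (swapOn τ w' w) :=
        Dfer_congr _ _ _ _ _ _ _ _ hswap hswap' (by omega)
      have hDy : Dfer q n y x (swapOn (insert n τ) w w') (swapOn (insert n τ) w' w)
          = Dfer q n y x (swapOn τ w w') (swapOn τ w' w) :=
        Dfer_congr _ _ _ _ _ _ _ _ hswap hswap' (by omega)
      have hval1 : swapOn τ w w' n = w n := by simp [swapOn, hτn]
      have hval2 : swapOn τ w' w n = w' n := by simp [swapOn, hτn]
      have hval3 : swapOn (insert n τ) w w' n = w' n := by simp [swapOn]
      have hval4 : swapOn (insert n τ) w' w n = w n := by simp [swapOn]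
      have hsplit : ∀ z z' : ℂ, ∀ σ : Finset ℕ,
          Dfer q (n+1) z z' (swapOn σ w w') (swapOn σ w' w)
            = Dfer q n z z' (swapOn σ w w') (swapOn σ w' w)
              * ((q * swapOn σ w' w (k+1) - swapOn σ w w' n)
                * (q * swapOn σ w' w n - swapOn σ w w' (k+1))) := by
        intro z z' σ
        have := Dfer_succ q k z z' (swapOn σ w w') (swapOn σ w' w)
        simpa [hn2] using this
      rw [hsplit, hsplit, hsplit, hsplit, hDx, hDy,
        Finset.prod_insert hτn, hval1, hval2, hval3, hval4]
      have hswA : swapOn (insert n τ) w w' (k+1) = swapOn τ w w' (k+1) := hswap _ (by omega)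
      have hswB : swapOn (insert n τ) w' w (k+1) = swapOn τ w' w (k+1) := hswap' _ (by omega)
      rw [hswA, hswB]
      -- now a pure algebra step using Esym
      set A := Dfer q n x y (swapOn τ w w') (swapOn τ w' w)
      set B := Dfer q n y x (swapOn τ w w') (swapOn τ w' w)
      set a := swapOn τ w w' (k+1)
      set a' := swapOn τ w' w (k+1)
      have hbracket : (q * a' - w n) * (q * w' n - a)
          + Hf q (w' n) (w n) * ((q * a' - w' n) * (q * w n - a)) = c := by
        have hd : q ^ 2 * w n ≠ w' n := hden n (by omega) (by omega)
        rcases Finset.decidableMem (k+1) τ with h | h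
        · have ha : a = w (k+1) := by simp [a, swapOn, h]
          have ha' : a' = w' (k+1) := by simp [a', swapOn, h]
          rw [ha, ha', hc]
        · have ha : a = w' (k+1) := by simp [a, swapOn, h]
          have ha' : a' = w (k+1) := by simp [a', swapOn, h]
          rw [ha, ha', hc]
          exact Esym q (w' (k+1)) (w (k+1)) (w n) (w' n) hd
      calc (∏ j ∈ τ, Hf q (w' j) (w j)) *
              (A * ((q * a' - w n) * (q * w' n - a)) - B * ((q * a' - w n) * (q * w' n - a)))
            + (Hf q (w' n) (w n) * ∏ j ∈ τ, Hf q (w' j) (w j)) *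
              (A * ((q * a' - w' n) * (q * w n - a)) - B * ((q * a' - w' n) * (q * w n - a)))
          = ((q * a' - w n) * (q * w' n - a)
              + Hf q (w' n) (w n) * ((q * a' - w' n) * (q * w n - a)))
            * ((∏ j ∈ τ, Hf q (w' j) (w j)) * (A - B)) := by ring
        _ = c * ((∏ j ∈ τ, Hf q (w' j) (w j)) * (A - B)) := by rw [hbracket]
    rw [Finset.sum_congr rfl hterm, ← Finset.mul_sum,
      ih (fun j h1 h2 => hden j h1 (by omega)) x y, mul_zero]

/-- Proposition 5′ (fermionic case), eq. (prop5:4):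
`D(w₀', w₀) ∼ D(w₀, w₀')` with respect to the fermionic pairs `(w₁, w₁'), …, (w_{μ−1}, w_{μ−1}')`. -/
theorem proposition5_fermionic (μ : ℕ) (hμ : 2 ≤ μ)
    (q : ℂ) (hq : q ≠ 0) (hq2 : q ^ 2 ≠ 1) (w w' : ℕ → ℂ)
    (hden : ∀ j ∈ Finset.Ico 1 μ, q ^ 2 * w j ≠ w' j) :
    WeakEq (Finset.Ico 1 μ) (fun _ => Hf q) w w'
      (fun u u' => Dfer q μ (u' 0) (u 0) u u')
      (fun u u' => Dfer q μ (u 0) (u' 0) u u') := by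
  unfold WeakEq
  rw [← sub_eq_zero, ← Finset.sum_sub_distrib]
  have h0 : ∀ σ ∈ (Finset.Ico 1 μ).powerset,
      (∏ j ∈ σ, Hf q (w' j) (w j)) *
          Dfer q μ (swapOn σ w' w 0) (swapOn σ w w' 0) (swapOn σ w w') (swapOn σ w' w)
        - (∏ j ∈ σ, Hf q (w' j) (w j)) *
          Dfer q μ (swapOn σ w w' 0) (swapOn σ w' w 0) (swapOn σ w w') (swapOn σ w' w)
      = (∏ j ∈ σ, Hf q (w' j) (w j)) *
          (Dfer q μ (w' 0) (w 0) (swapOn σ w w') (swapOn σ w' w)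
            - Dfer q μ (w 0) (w' 0) (swapOn σ w w') (swapOn σ w' w)) := by
    intro σ hσ
    rw [Finset.mem_powerset] at hσ
    have h0σ : 0 ∉ σ := fun h => by simpa using hσ h
    rw [show swapOn σ w w' 0 = w 0 by simp [swapOn, h0σ],
      show swapOn σ w' w 0 = w' 0 by simp [swapOn, h0σ], mul_sub]
  rw [Finset.sum_congr rfl h0]
  exact key q w w' μ hμ (fun j h1 h2 => hden j (Finset.mem_Ico.mpr ⟨h1, h2⟩)) (w' 0) (w 0)
end
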